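/- arXiv:math/0512169 — 10 statements merged into one kernel-verified Lean document; each statement's English description precedes it below -/
import Mathlib

section
/- For a prime p, each coefficient (p!)²/((i!)² (p-i)!) for 1 ≤ i ≤ p-1 is divisible by p², and the coefficient for i = 0, namely p!, is congruent to -p modulo p². Consequently [(d/dx)^p, x^p] ≡ -p (mod p²) in the ring of differential operators on ℤ[x]. -/
/-! Wilson's theorem gives `p! ≡ -p (mod p²)`, and `p ∣ C(p, i)` for `0 < i < p` makes the
coefficients `(p!)²/((i!)²(p-i)!) = C(p, i)² (p-i)!` divisible by `p²`. These are the coefficients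
of the normal-ordered expansion `D^m X^m = ∑ᵢ C(m, i)² (m-i)! Xⁱ Dⁱ`, which on `Xⁿ` is the
Vandermonde-type identity `(m+n)⋯(n+1) = ∑ᵢ C(m, i)² (m-i)! · n(n-1)⋯(n-i+1)`. In the commutator
the term `i = m` cancels, the term `i = 0` is `p!`, and all the others vanish modulo `p²`. -/

open Polynomial

/-- The operator `d/dx` on `ℤ[x]`. -/
noncomputable def Dop : Module.End ℤ (Polynomial ℤ) := Polynomial.derivative

/-- The operator of multiplication by `x` on `ℤ[x]`. -/
noncomputable def Xop : Module.End ℤ (Polynomial ℤ) :=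
  LinearMap.mulLeft ℤ (Polynomial.X : Polynomial ℤ)

open Finset Nat

theorem Nat.add_descFactorial_self_eq_sum (m n : ℕ) :
    (m + n).descFactorial m =
      ∑ i ∈ range (m + 1), m.choose i ^ 2 * (m - i)! * n.descFactorial i := by
  rw [descFactorial_eq_factorial_mul_choose, add_comm, add_choose_eq,
    Finset.Nat.sum_antidiagonal_eq_sum_range_succ (fun a b => n.choose a * m.choose b), mul_sum]
  refine sum_congr rfl fun i hi => ?_
  have hi : i ≤ m := Nat.lt_succ_iff.mp (mem_range.mp hi)
  rw [choose_symm hi, descFactorial_eq_factorial_mul_choose,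
    ← choose_mul_factorial_mul_factorial hi]
  ring

theorem Nat.factorial_sq_div_eq_choose_sq_mul {m i : ℕ} (hi : i ≤ m) :
    m ! ^ 2 / (i ! ^ 2 * (m - i)!) = m.choose i ^ 2 * (m - i)! := by
  refine Nat.div_eq_of_eq_mul_right (by positivity) ?_
  rw [← choose_mul_factorial_mul_factorial hi]
  ring

theorem Nat.Prime.sq_dvd_choose_sq_mul {p i : ℕ} (hp : p.Prime) (hi0 : i ≠ 0) (hip : i < p)
    (k : ℕ) : p ^ 2 ∣ p.choose i ^ 2 * k :=
  Dvd.dvd.mul_right (pow_dvd_pow_of_dvd (hp.dvd_choose_self hi0 hip) 2) k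

theorem Nat.Prime.factorial_modEq_neg_self {p : ℕ} (hp : p.Prime) :
    (p ! : ℤ) ≡ -p [ZMOD (p ^ 2 : ℕ)] := by
  have := Fact.mk hp
  have wilson : ((p - 1)! : ℤ) ≡ -1 [ZMOD p] :=
    (ZMod.intCast_eq_intCast_iff _ _ p).mp (by simp [ZMod.wilsons_lemma])
  have h := wilson.mul_left' (c := p)
  rwa [mul_neg_one, ← sq, ← Nat.cast_mul, Nat.mul_factorial_pred hp.ne_zero] at h

theorem Finset.exists_sum_nsmul_eq_nsmul {ι M : Type*} [AddCommMonoid M] {s : Finset ι}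
    {c : ι → ℕ} {d : ℕ} (f : ι → M) (h : ∀ i ∈ s, d ∣ c i) :
    ∃ e : M, ∑ i ∈ s, c i • f i = d • e :=
  ⟨∑ i ∈ s, (c i / d) • f i, by
    rw [smul_sum]
    exact sum_congr rfl fun i hi => by rw [smul_smul, Nat.mul_div_cancel' (h i hi)]⟩

section NormalOrdering

variable {R : Type*} [CommSemiring R]

local notation "𝔻" => (derivative : R[X] →ₗ[R] R[X])
local notation "𝕏" => LinearMap.mulLeft R (X : R[X])

theorem Polynomial.mulLeft_X_pow_mul_derivative_pow_apply_X_pow (i n : ℕ) :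
    (𝕏 ^ i * 𝔻 ^ i) (X ^ n) = (n.descFactorial i : R) • X ^ n := by
  rw [Module.End.mul_apply, LinearMap.pow_mulLeft, LinearMap.mulLeft_apply, Module.End.pow_apply,
    iterate_derivative_X_pow_eq_smul, mul_smul_comm, ← pow_add]
  rcases le_or_gt i n with h | h
  · rw [Nat.add_sub_cancel' h]
  · simp [descFactorial_eq_zero_iff_lt.mpr h]

theorem Polynomial.derivative_pow_mul_mulLeft_X_pow (m : ℕ) :
    𝔻 ^ m * 𝕏 ^ m = ∑ i ∈ range (m + 1), (m.choose i ^ 2 * (m - i)!) • (𝕏 ^ i * 𝔻 ^ i) := by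
  refine (basisMonomials R).ext fun n => ?_
  rw [coe_basisMonomials]
  dsimp only
  rw [monomial_one_right_eq_X_pow, Module.End.mul_apply, LinearMap.pow_mulLeft,
    LinearMap.mulLeft_apply, ← pow_add, Module.End.pow_apply, iterate_derivative_X_pow_eq_smul,
    Nat.add_sub_cancel_left, LinearMap.sum_apply]
  simp only [LinearMap.smul_apply, mulLeft_X_pow_mul_derivative_pow_apply_X_pow,
    ← Nat.cast_smul_eq_nsmul R, smul_smul, ← sum_smul]
  rw [add_descFactorial_self_eq_sum]
  push_cast
  rfl

end NormalOrdering

/-- For a prime `p`, each coefficient `(p!)²/((i!)² (p-i)!)` for `1 ≤ i ≤ p-1` is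
divisible by `p²`, the coefficient for `i = 0`, namely `p!`, is congruent to `-p`
modulo `p²`, and consequently `[(d/dx)^p, x^p] ≡ -p (mod p²)` in the ring of
differential operators on `ℤ[x]`. -/
theorem stmt2 (p : ℕ) [Fact p.Prime] :
    (∀ i : ℕ, 1 ≤ i → i ≤ p - 1 →
      (p ^ 2 : ℕ) ∣ p.factorial ^ 2 / (i.factorial ^ 2 * (p - i).factorial)) ∧
    ((p.factorial : ℤ) ≡ -(p : ℤ) [ZMOD (p ^ 2 : ℕ)]) ∧
    (∃ E : Module.End ℤ (Polynomial ℤ),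
      Dop ^ p * Xop ^ p - Xop ^ p * Dop ^ p = -((p : ℤ) • (1 : Module.End ℤ (Polynomial ℤ))) +
        (p ^ 2 : ℕ) • E) := by
  have hp : p.Prime := Fact.out
  refine ⟨fun i hi0 hip => ?_, hp.factorial_modEq_neg_self, ?_⟩
  · rw [factorial_sq_div_eq_choose_sq_mul (by omega)]
    exact hp.sq_dvd_choose_sq_mul (by omega) (by omega) _
  obtain ⟨c, hc⟩ := hp.factorial_modEq_neg_self.symm.dvd
  have expansion : Dop ^ p * Xop ^ p =
      ∑ i ∈ range (p + 1), (p.choose i ^ 2 * (p - i)!) • (Xop ^ i * Dop ^ i) :=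
    derivative_pow_mul_mulLeft_X_pow p
  obtain ⟨q, rfl⟩ : ∃ q, p = q + 1 := exists_eq_succ_of_ne_zero hp.ne_zero
  obtain ⟨e, he⟩ := exists_sum_nsmul_eq_nsmul (s := range q) (d := (q + 1) ^ 2)
    (fun i => Xop ^ (i + 1) * Dop ^ (i + 1))
    (fun i hi => hp.sq_dvd_choose_sq_mul (succ_ne_zero i) (by simp at hi; omega) _)
  refine ⟨c • 1 + e, ?_⟩
  have hfac : ((q + 1)! : Module.End ℤ ℤ[X]) = ((-(q + 1) + (q + 1) ^ 2 * c : ℤ) : _) := by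
    rw [← Int.cast_natCast]
    congr 1
    push_cast at hc ⊢
    linarith
  rw [expansion, sum_range_succ, sum_range_succ', he]
  simp only [choose_self, choose_zero_right, Nat.sub_self, Nat.sub_zero, factorial_zero, one_pow,
    pow_zero, one_mul, mul_one, one_smul, nsmul_eq_mul, zsmul_eq_mul, hfac]
  push_cast
  noncomm_ring
end

section
/- Let p be a prime and A an associative ring of characteristic p. For any a, b ∈ A, (ad a)^{p-1}(b) = Σ_{i=0}^{p-1} a^i b a^{p-1-i}, where ad a denotes the map x ↦ ax - xa. -/
open Finset

lemma choose_prime_sub_one_cast (p : ℕ) (hp : p.Prime) (m : ℕ) (hm : m < p) :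
    (((p - 1).choose m : ZMod p)) = (-1) ^ m := by
  haveI := Fact.mk hp
  induction m with
  | zero => simp
  | succ k ih =>
    have hk : k < p := Nat.lt_of_succ_lt hm
    have hpascal : p.choose (k + 1) = (p - 1).choose k + (p - 1).choose (k + 1) := by
      conv_lhs => rw [show p = (p - 1) + 1 from (Nat.succ_pred_eq_of_pos hp.pos).symm]
      exact Nat.choose_succ_succ _ _
    have h0 : ((p.choose (k + 1) : ZMod p)) = 0 :=
      (ZMod.natCast_eq_zero_iff _ _).mpr
        (hp.dvd_choose_self (Nat.succ_ne_zero k) hm)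
    rw [hpascal] at h0
    push_cast at h0
    rw [ih hk] at h0
    rw [pow_succ]
    linear_combination h0

/-- Let `p` be a prime and `A` an associative ring of characteristic `p`. For any
`a, b ∈ A`, `(ad a)^{p-1}(b) = Σ_{i=0}^{p-1} a^i b a^{p-1-i}`, where `ad a` is
the map `x ↦ ax - xa`. -/
theorem stmt3 (p : ℕ) [Fact p.Prime] (A : Type*) [Ring A] [CharP A p] (a b : A) :
    (fun x => a * x - x * a)^[p - 1] b =
      ∑ i ∈ Finset.range p, a ^ i * b * a ^ (p - 1 - i) := by
  have hp : p.Prime := Fact.out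
  set L : Module.End ℤ A := LinearMap.mulLeft ℤ a with hL
  set R : Module.End ℤ A := LinearMap.mulRight ℤ a with hR
  have hiter : (fun x => a * x - x * a)^[p - 1] b = ((L - R) ^ (p - 1)) b := by
    have hfun : (fun x => a * x - x * a) = ⇑(L - R) := by
      funext x; simp [hL, hR]
    rw [hfun, Module.End.pow_apply]
  rw [hiter]
  have hcomm : Commute L (-R) := (LinearMap.commute_mulLeft_right a a).neg_right
  have hexp : (L - R) ^ (p - 1) =
      ∑ m ∈ range (p - 1 + 1), L ^ m * (-R) ^ (p - 1 - m) * ((p - 1).choose m : Module.End ℤ A) := by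
    rw [sub_eq_add_neg]
    exact hcomm.add_pow (p - 1)
  have hrange : p - 1 + 1 = p := Nat.succ_pred_eq_of_pos hp.pos
  rw [hexp, hrange, LinearMap.sum_apply]
  refine Finset.sum_congr rfl fun m hm => ?_
  have hm' : m < p := mem_range.mp hm
  have hterm : (L ^ m * (-R) ^ (p - 1 - m) * ((p - 1).choose m : Module.End ℤ A)) b =
      (((-1) ^ (p - 1 - m) * ((p - 1).choose m) : ℤ)) • (a ^ m * b * a ^ (p - 1 - m)) := by
    have h1 : (-R) ^ (p - 1 - m) = (-1 : ℤ) ^ (p - 1 - m) • R ^ (p - 1 - m) := by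
      rcases Nat.even_or_odd (p - 1 - m) with h | h
      · rw [h.neg_pow, h.neg_one_pow, one_smul]
      · rw [h.neg_pow, h.neg_one_pow, neg_one_zsmul]
    rw [Module.End.mul_apply, Module.End.mul_apply, h1]
    have hcast : ((p - 1).choose m : Module.End ℤ A) b = ((p - 1).choose m : ℤ) • b := by
      rw [Module.End.natCast_apply, natCast_zsmul]
    rw [hcast]
    simp only [map_smul, LinearMap.smul_apply]
    rw [hL, hR, LinearMap.pow_mulLeft, LinearMap.pow_mulRight]
    simp only [LinearMap.mulLeft_apply, LinearMap.mulRight_apply]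
    rw [smul_smul]
    congr 1
    · ring
    · rw [mul_assoc]
  rw [hterm]
  set c : ℤ := (-1) ^ (p - 1 - m) * ((p - 1).choose m) with hc
  have hcoeff : ((c : ℤ) : ZMod p) = 1 := by
    rw [hc]
    push_cast
    rw [choose_prime_sub_one_cast p hp m hm', ← pow_add,
      show p - 1 - m + m = p - 1 by omega]
    rcases hp.eq_two_or_odd' with h2 | hodd
    · subst h2; norm_num; exact CharTwo.neg_eq 1
    · exact Even.neg_one_pow (Nat.Odd.sub_odd hodd odd_one)
  have hone : ((c : ℤ) : A) = 1 := by
    have hdvd : (p : ℤ) ∣ c - 1 := by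
      have := (ZMod.intCast_zmod_eq_zero_iff_dvd (c - 1) p).mp (by push_cast; rw [hcoeff]; ring)
      exact_mod_cast this
    have h0 : ((c - 1 : ℤ) : A) = 0 := (CharP.intCast_eq_zero_iff A p _).mpr hdvd
    push_cast at h0
    exact sub_eq_zero.mp h0
  rw [zsmul_eq_mul, hone, one_mul]
end

section
/- Let p be a prime, A an associative ring of characteristic p, and a, b ∈ A such that (ad a)^{p-1}(b) = 0. Then Σ_{i=0}^{p-1} a^i b a^{p-1-i} = 0, and consequently any derivation δ of A satisfying δ(a) = b gives δ(a^p) = 0. -/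
open Finset

private lemma end_pow_apply {A : Type*} [AddCommGroup A] (f : AddMonoid.End A) (k : ℕ) (x : A) :
    (f ^ k) x = (⇑f)^[k] x := by
  induction k generalizing x with
  | zero => rfl
  | succ k ih =>
    rw [pow_succ]
    show (f ^ k) (f x) = (⇑f)^[k + 1] x
    rw [ih, Function.iterate_succ_apply]

private lemma choose_cast_char {p : ℕ} (hp : p.Prime) {A : Type*} [Ring A] [CharP A p] :
    ∀ m, m ≤ p - 1 → (((p - 1).choose m : ℕ) : A) = (-1) ^ m := by
  intro m
  induction m with
  | zero => intro _; simp
  | succ m ih =>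
    intro hm
    have h1 : (p.choose (m + 1) : A) = 0 := by
      rw [CharP.cast_eq_zero_iff A p]
      exact hp.dvd_choose_self (Nat.succ_ne_zero m) (by omega)
    have hpn : p = (p - 1) + 1 := (Nat.succ_pred_eq_of_pos hp.pos).symm
    have hpas : p.choose (m + 1) = (p - 1).choose m + (p - 1).choose (m + 1) := by
      conv_lhs => rw [hpn]
      exact Nat.choose_succ_succ _ _
    have h2 : ((p - 1).choose m : A) + ((p - 1).choose (m + 1) : A) = 0 := by
      rw [← Nat.cast_add, ← hpas, h1]
    have h3 : ((p - 1).choose (m + 1) : A) = -(((p - 1).choose m : ℕ) : A) :=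
      (neg_eq_of_add_eq_zero_right h2).symm
    rw [h3, ih (by omega), pow_succ, mul_neg_one]

/-- Let `p` be a prime, `A` an associative ring of characteristic `p`, and
`a, b ∈ A` such that `(ad a)^{p-1}(b) = 0`. Then `Σ_{i=0}^{p-1} a^i b a^{p-1-i} = 0`,
and consequently any derivation `δ` of `A` (an additive map satisfying the Leibniz
rule) with `δ(a) = b` satisfies `δ(a^p) = 0`. -/
theorem stmt5 (p : ℕ) [Fact p.Prime] (A : Type*) [Ring A] [CharP A p] (a b : A)
    (h : (fun x => a * x - x * a)^[p - 1] b = 0) :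
    (∑ i ∈ Finset.range p, a ^ i * b * a ^ (p - 1 - i) = 0) ∧
    (∀ δ : A →+ A, (∀ x y : A, δ (x * y) = δ x * y + x * δ y) → δ a = b →
      δ (a ^ p) = 0) := by
  have hp : p.Prime := Fact.out
  set n := p - 1 with hn
  have hpn : p = n + 1 := (Nat.succ_pred_eq_of_pos hp.pos).symm
  set L : AddMonoid.End A := AddMonoidHom.mulLeft a with hL
  set R : AddMonoid.End A := AddMonoidHom.mulRight a with hR
  have hLpow : ∀ (k : ℕ) (x : A), (L ^ k) x = a ^ k * x := by
    intro k
    induction k with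
    | zero => intro x; simp
    | succ k ih =>
      intro x
      rw [pow_succ]
      show (L ^ k) (a * x) = a ^ (k + 1) * x
      rw [ih, ← mul_assoc, ← pow_succ]
  have hnRpow : ∀ (k : ℕ) (x : A), ((-R) ^ k) x = (-1 : A) ^ k * (x * a ^ k) := by
    intro k
    induction k with
    | zero => intro x; simp
    | succ k ih =>
      intro x
      rw [pow_succ]
      show ((-R) ^ k) ((-R) x) = _
      have : (-R) x = -(x * a) := rfl
      rw [this, ih, pow_succ, pow_succ]
      simp only [mul_neg, neg_mul, mul_one, mul_assoc]
      rw [pow_mul_comm']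
  have hcLR : Commute L R := by
    refine AddMonoidHom.ext fun x => ?_
    show a * (x * a) = (a * x) * a
    rw [mul_assoc]
  have hc : Commute L (-R) := hcLR.neg_right
  have hbin : (L - R) ^ n =
      ∑ m ∈ range (n + 1), L ^ m * (-R) ^ (n - m) * ((n.choose m : ℕ) : AddMonoid.End A) := by
    rw [sub_eq_add_neg]
    exact hc.add_pow n
  -- evaluate both sides at b
  have hLRb : ((L - R) ^ n) b = 0 := by
    rw [end_pow_apply]
    have hfun : ⇑(L - R) = fun x => a * x - x * a := rfl
    rw [hfun]
    exact h
  have hterm : ∀ m ∈ range (n + 1),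
      (L ^ m * (-R) ^ (n - m) * ((n.choose m : ℕ) : AddMonoid.End A)) b
        = (-1 : A) ^ n * (a ^ m * b * a ^ (n - m)) := by
    intro m hm
    rw [mem_range] at hm
    show (L ^ m) (((-R) ^ (n - m)) (((n.choose m : ℕ) : AddMonoid.End A) b)) = _
    rw [AddMonoid.End.natCast_apply, hnRpow, hLpow, nsmul_eq_mul,
      choose_cast_char hp m (by omega)]
    have hsign : (-1 : A) ^ (n - m) * ((-1) ^ m * b * a ^ (n - m)) =
        (-1) ^ n * (b * a ^ (n - m)) := by
      have : (-1 : A) ^ (n - m) * (-1) ^ m = (-1) ^ n := by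
        rw [← pow_add]
        congr 1
        omega
      calc (-1 : A) ^ (n - m) * ((-1) ^ m * b * a ^ (n - m))
          = ((-1 : A) ^ (n - m) * (-1) ^ m) * (b * a ^ (n - m)) := by
            simp only [mul_assoc]
        _ = (-1 : A) ^ n * (b * a ^ (n - m)) := by rw [this]
    rw [hsign]
    have hcomm : a ^ m * ((-1 : A) ^ n * (b * a ^ (n - m))) =
        (-1 : A) ^ n * (a ^ m * b * a ^ (n - m)) := by
      have hc1 : Commute ((-1 : A) ^ n) (a ^ m) := ((Commute.neg_one_left _).pow_left n).pow_right m
      rw [← mul_assoc, ← hc1.eq]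
      simp only [mul_assoc]
    exact hcomm
  have hsum0 : (-1 : A) ^ n * ∑ m ∈ range (n + 1), a ^ m * b * a ^ (n - m) = 0 := by
    rw [Finset.mul_sum]
    rw [← Finset.sum_congr rfl hterm]
    have : ∑ m ∈ range (n + 1),
        (L ^ m * (-R) ^ (n - m) * ((n.choose m : ℕ) : AddMonoid.End A)) b
        = ((L - R) ^ n) b := by
      rw [hbin]
      exact (AddMonoidHom.finset_sum_apply _ _ _).symm
    rw [this, hLRb]
  have hfirst : ∑ i ∈ Finset.range p, a ^ i * b * a ^ (p - 1 - i) = 0 := by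
    have key : ∑ m ∈ range (n + 1), a ^ m * b * a ^ (n - m) = 0 := by
      have hone : (-1 : A) ^ n * (-1 : A) ^ n = 1 := by
        rw [← pow_add, ← two_mul, pow_mul, neg_one_sq, one_pow]
      calc ∑ m ∈ range (n + 1), a ^ m * b * a ^ (n - m)
          = ((-1 : A) ^ n * (-1 : A) ^ n) * ∑ m ∈ range (n + 1), a ^ m * b * a ^ (n - m) := by
            rw [hone, one_mul]
        _ = (-1 : A) ^ n * ((-1 : A) ^ n * ∑ m ∈ range (n + 1), a ^ m * b * a ^ (n - m)) := by
            rw [mul_assoc]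
        _ = 0 := by rw [hsum0, mul_zero]
    rw [hpn] at *
    exact key
  refine ⟨hfirst, fun δ hleib hδa => ?_⟩
  have hδ1 : δ 1 = 0 := by
    have h1 := hleib 1 1
    simp only [mul_one, one_mul] at h1
    exact (left_eq_add.mp h1)
  have hder : ∀ k, δ (a ^ k) = ∑ i ∈ range k, a ^ i * δ a * a ^ (k - 1 - i) := by
    intro k
    induction k with
    | zero => simpa using hδ1
    | succ k ih =>
      rw [pow_succ, hleib, ih, Finset.sum_mul, Finset.sum_range_succ]
      congr 1
      · refine Finset.sum_congr rfl fun i hi => ?_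
        rw [mem_range] at hi
        rw [mul_assoc, ← pow_succ]
        congr 2
        omega
      · simp
  rw [hder p, hδa, hpn]
  simpa [hpn] using hfirst
end

section
/- Let p be a prime, A an associative ring of characteristic p, and a ∈ A a locally ad-nilpotent element, i.e. for every u ∈ A there exists k with (ad a)^k(u) = 0. If D(b) < p for b ∈ A (meaning (ad a)^{p-1}(b) = 0), then for any derivation δ of A with δ(a) = b one has δ(a^p) = 0; in particular a^p is annihilated by every derivation δ such that (ad a)^{p-1}(δ(a)) = 0. -/
/-!
By the Leibniz rule, `δ (a ^ p) = ∑_{i<p} a ^ i δ(a) a ^ (p-1-i)`, which is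
`∑_{i<p} L ^ i R ^ (p-1-i)` applied to `δ a`, where `L` and `R` are left and right multiplication
by `a`. These commute, and in characteristic `p` the sum `∑_{i<p} x ^ i y ^ (p-1-i)` of commuting
`x, y` equals `(x - y) ^ (p-1)`, because all binomial coefficients `C(p, k+1)` with `k < p - 1`
vanish. Hence `δ (a ^ p) = (ad a) ^ (p-1) (δ a)`.
-/

open Finset

theorem Commute.geom_sum₂_eq_sum_choose {R : Type*} [Ring R] {x y : R} (h : Commute x y) (n : ℕ) :
    ∑ i ∈ range n, x ^ i * y ^ (n - 1 - i) =
      ∑ k ∈ range n, n.choose (k + 1) • ((x - y) ^ k * y ^ (n - 1 - k)) := by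
  induction n with
  | zero => simp
  | succ n ih =>
    have hd : Commute (x - y) y := h.sub_left (Commute.refl y)
    have binomial : x ^ n = ∑ k ∈ range (n + 1), n.choose k • ((x - y) ^ k * y ^ (n - k)) := by
      conv_lhs => rw [← sub_add_cancel x y, hd.add_pow]
      refine sum_congr rfl fun k _ => ?_
      rw [nsmul_eq_mul', mul_assoc]
    have shift : y * ∑ k ∈ range n, n.choose (k + 1) • ((x - y) ^ k * y ^ (n - 1 - k)) =
        ∑ k ∈ range (n + 1), n.choose (k + 1) • ((x - y) ^ k * y ^ (n - k)) := by
      rw [sum_range_succ, Nat.choose_succ_self, zero_smul, add_zero, mul_sum]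
      refine sum_congr rfl fun k hk => ?_
      rw [mul_smul_comm, ← mul_assoc, ← (hd.pow_left k).eq, mul_assoc, ← pow_succ']
      congr 3
      have := mem_range.mp hk
      omega
    simp only [Nat.add_sub_cancel]
    rw [h.geom_sum₂_succ_eq, ih, binomial, shift, ← sum_add_distrib]
    refine sum_congr rfl fun k _ => ?_
    rw [Nat.choose_succ_succ', add_smul]

theorem Commute.geom_sum₂_eq_sub_pow_of_charP {R : Type*} [Ring R] (p : ℕ) [Fact p.Prime]
    [CharP R p] {x y : R} (h : Commute x y) :
    ∑ i ∈ range p, x ^ i * y ^ (p - 1 - i) = (x - y) ^ (p - 1) := by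
  have hp : p.Prime := Fact.out
  rw [h.geom_sum₂_eq_sum_choose, ← Nat.sub_add_cancel hp.one_le, sum_range_succ,
    Nat.sub_add_cancel hp.one_le, Nat.choose_self, one_smul, Nat.sub_self, pow_zero, mul_one,
    add_eq_right]
  refine sum_eq_zero fun k hk => ?_
  have hkp : k + 1 < p := by have := mem_range.mp hk; omega
  rw [nsmul_eq_mul, (CharP.cast_eq_zero_iff R p _).mpr (hp.dvd_choose_self k.succ_ne_zero hkp),
    zero_mul]

theorem iterate_ad_pred_eq_sum_of_charP {A : Type*} [Ring A] (p : ℕ) [Fact p.Prime] [CharP A p]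
    (a b : A) :
    (fun x => a * x - x * a)^[p - 1] b = ∑ i ∈ range p, a ^ i * b * a ^ (p - 1 - i) := by
  have : CharP (Module.End ℤ A) p :=
    charP_of_injective_ringHom (f := (Algebra.lmul ℤ A).toRingHom) Algebra.lmul_injective p
  have key := (LinearMap.commute_mulLeft_right (R := ℤ) a a).geom_sum₂_eq_sub_pow_of_charP p
  calc (fun x => a * x - x * a)^[p - 1] b
      = ((LinearMap.mulLeft ℤ a - LinearMap.mulRight ℤ a) ^ (p - 1)) b := by
        rw [Module.End.pow_apply]; rfl
    _ = ∑ i ∈ range p, a ^ i * b * a ^ (p - 1 - i) := by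
        simp [← key, LinearMap.sum_apply, mul_assoc]

theorem AddMonoidHom.map_pow_eq_sum_of_leibniz {A : Type*} [Ring A] (δ : A →+ A)
    (hδ : ∀ x y : A, δ (x * y) = δ x * y + x * δ y) (a : A) (n : ℕ) :
    δ (a ^ n) = ∑ i ∈ Finset.range n, a ^ i * δ a * a ^ (n - 1 - i) := by
  induction n with
  | zero => simpa using hδ 1 1
  | succ n ih =>
    rw [pow_succ, hδ, ih, sum_range_succ, sum_mul]
    simp only [Nat.add_sub_cancel, Nat.sub_self, pow_zero, mul_one]
    congr 1
    refine sum_congr rfl fun i hi => ?_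
    rw [mul_assoc, ← pow_succ]
    congr 2
    have := Finset.mem_range.mp hi
    omega

theorem stmt6_general (p : ℕ) [Fact p.Prime] (A : Type*) [Ring A] [CharP A p] (a : A) :
    (∀ b : A, (fun x => a * x - x * a)^[p - 1] b = 0 →
      ∀ δ : A →+ A, (∀ x y : A, δ (x * y) = δ x * y + x * δ y) → δ a = b →
        δ (a ^ p) = 0) ∧
    (∀ δ : A →+ A, (∀ x y : A, δ (x * y) = δ x * y + x * δ y) →
      (fun x => a * x - x * a)^[p - 1] (δ a) = 0 → δ (a ^ p) = 0) := by
  have main : ∀ δ : A →+ A, (∀ x y : A, δ (x * y) = δ x * y + x * δ y) →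
      (fun x => a * x - x * a)^[p - 1] (δ a) = 0 → δ (a ^ p) = 0 := fun δ hδ h => by
    rwa [δ.map_pow_eq_sum_of_leibniz hδ, ← iterate_ad_pred_eq_sum_of_charP]
  exact ⟨fun b hb δ hδ hδa => main δ hδ (hδa ▸ hb), main⟩

/-- Let `p` be a prime, `A` an associative ring of characteristic `p`, and `a ∈ A`
a locally ad-nilpotent element, i.e. for every `u ∈ A` there exists `k` with
`(ad a)^k(u) = 0`. If `(ad a)^{p-1}(b) = 0` for `b ∈ A`, then for any derivation
`δ` of `A` with `δ(a) = b` one has `δ(a^p) = 0`; in particular `a^p` is annihilated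
by every derivation `δ` such that `(ad a)^{p-1}(δ(a)) = 0`. -/
theorem stmt6 (p : ℕ) [Fact p.Prime] (A : Type*) [Ring A] [CharP A p] (a : A)
    (hloc : ∀ u : A, ∃ k : ℕ, (fun x => a * x - x * a)^[k] u = 0) :
    (∀ b : A, (fun x => a * x - x * a)^[p - 1] b = 0 →
      ∀ δ : A →+ A, (∀ x y : A, δ (x * y) = δ x * y + x * δ y) → δ a = b →
        δ (a ^ p) = 0) ∧
    (∀ δ : A →+ A, (∀ x y : A, δ (x * y) = δ x * y + x * δ y) →
      (fun x => a * x - x * a)^[p - 1] (δ a) = 0 → δ (a ^ p) = 0) :=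
  stmt6_general p A a
end

section
/- Over a commutative ring R of characteristic p, for any polynomial g ∈ R[x] one has (d/dx + g')^p = (d/dx)^p + (g')^p in the ring of R-linear differential operators on R[x], where g' = dg/dx. -/
open Polynomial Finset

section Aux

/-- Generic binomial recursion lemma. -/
lemma binom_rec {M : Type*} [AddCommMonoid M] (Φ : M →+ M) (F : ℕ → ℕ → M)
    (hF : ∀ n j, j ≤ n → Φ (F n j) = F (n + 1) j + F (n + 1) (j + 1)) (n : ℕ) :
    Φ^[n] (F 0 0) = ∑ j ∈ range (n + 1), n.choose j • F n j := by
  induction n with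
  | zero => simp
  | succ n ih =>
    rw [Function.iterate_succ_apply', ih, map_sum]
    have key : ∀ j ∈ range (n + 1), Φ (n.choose j • F n j)
        = n.choose j • F (n + 1) j + n.choose j • F (n + 1) (j + 1) := by
      intro j hj
      rw [Finset.mem_range] at hj
      rw [map_nsmul, hF n j (by omega), smul_add]
    rw [Finset.sum_congr rfl key, Finset.sum_add_distrib]
    have h1 : ∑ j ∈ range (n + 1), n.choose j • F (n + 1) j
        = ∑ j ∈ range (n + 2), n.choose j • F (n + 1) j := by
      rw [Finset.sum_range_succ (n := n + 1)]
      simp [Nat.choose_succ_self]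
    rw [h1, Finset.sum_range_succ' (fun j => n.choose j • F (n + 1) j) (n + 1)]
    rw [Finset.sum_range_succ' (fun j => (n + 1).choose j • F (n + 1) j) (n + 1)]
    simp only [Nat.choose_zero_right, one_smul, Nat.choose_succ_succ, add_smul]
    rw [Finset.sum_add_distrib]
    abel

/-- Kill middle binomial coefficients in characteristic `p`. -/
lemma sum_choose_p {p : ℕ} [Fact p.Prime] (S : Type*) [CommRing S] [CharP S p]
    {M : Type*} [AddCommMonoid M] [Module S M] (F : ℕ → M) :
    ∑ j ∈ range (p + 1), p.choose j • F j = F 0 + F p := by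
  have hp : p.Prime := Fact.out
  obtain ⟨k, hk⟩ : ∃ k, p = k + 1 := ⟨p - 1, by have := hp.pos; omega⟩
  rw [Finset.sum_range_succ, Nat.choose_self, one_smul]
  congr 1
  rw [hk, Finset.sum_range_succ' (fun j => (k + 1).choose j • F j) k]
  have hmid : ∀ j ∈ range k, (k + 1).choose (j + 1) • F (j + 1) = 0 := by
    intro j hj
    rw [Finset.mem_range] at hj
    have hdvd : p ∣ (k + 1).choose (j + 1) := by
      rw [← hk]; exact hp.dvd_choose_self (Nat.succ_ne_zero j) (by omega)
    have hz : (((k + 1).choose (j + 1) : ℕ) : S) = 0 :=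
      (CharP.cast_eq_zero_iff S p _).mpr hdvd
    rw [← Nat.cast_smul_eq_nsmul S, hz, zero_smul]
  rw [Finset.sum_congr rfl hmid]
  simp

end Aux

section USeq

variable {S : Type*} [CommRing S]

/-- The sequence `u 0 = 1`, `u (m+1) = u m' + g' * u m`. -/
noncomputable def uSeq (g : Polynomial S) : ℕ → Polynomial S
  | 0 => 1
  | m + 1 => derivative (uSeq g m) + derivative g * uSeq g m

lemma uSeq_zero (g : Polynomial S) : uSeq g 0 = 1 := rfl

lemma uSeq_succ (g : Polynomial S) (m : ℕ) :
    uSeq g (m + 1) = derivative (uSeq g m) + derivative g * uSeq g m := rfl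

/-- The operator expansion `(D + g')^n = ∑ C(n,j) • (M_{u_j} ∘ D^(n-j))`. -/
lemma opExpand (g : Polynomial S) (n : ℕ) :
    ((derivative : Module.End S (Polynomial S)) + LinearMap.mulLeft S (derivative g)) ^ n
      = ∑ j ∈ range (n + 1), n.choose j •
          (LinearMap.mulLeft S (uSeq g j) *
            (derivative : Module.End S (Polynomial S)) ^ (n - j)) := by
  set D : Module.End S (Polynomial S) := (derivative : Module.End S (Polynomial S)) with hD
  set A : Module.End S (Polynomial S) := D + LinearMap.mulLeft S (derivative g) with hA
  have step : ∀ m j, j ≤ m →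
      (AddMonoidHom.mulLeft A) (LinearMap.mulLeft S (uSeq g j) * D ^ (m - j))
        = LinearMap.mulLeft S (uSeq g j) * D ^ (m + 1 - j)
          + LinearMap.mulLeft S (uSeq g (j + 1)) * D ^ (m + 1 - (j + 1)) := by
    intro m j hj
    have h1 : m + 1 - j = (m - j) + 1 := by omega
    have h2 : m + 1 - (j + 1) = m - j := by omega
    rw [h1, h2]
    apply LinearMap.ext
    intro q
    simp only [AddMonoidHom.coe_mulLeft, hA, hD, Module.End.mul_apply, LinearMap.add_apply,
      LinearMap.mulLeft_apply, pow_succ', uSeq_succ]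
    rw [derivative_mul]
    ring
  have hiter : ∀ m, (AddMonoidHom.mulLeft A)^[m] (1 : Module.End S (Polynomial S)) = A ^ m := by
    intro m
    induction m with
    | zero => simp
    | succ m ih =>
      rw [Function.iterate_succ_apply', ih, AddMonoidHom.coe_mulLeft, ← pow_succ']
  have hbase : LinearMap.mulLeft S (uSeq g 0) * D ^ (0 - 0)
      = (1 : Module.End S (Polynomial S)) := by
    rw [uSeq_zero, LinearMap.mulLeft_one, Nat.sub_self, pow_zero, mul_one,
      Module.End.one_eq_id]
  have := binom_rec (AddMonoidHom.mulLeft A)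
      (fun m j => LinearMap.mulLeft S (uSeq g j) * D ^ (m - j)) step n
  rw [hbase, hiter] at this
  exact this

/-- naturality of `uSeq` under ring maps. -/
lemma uSeq_map {R : Type*} [CommRing R] (φ : S →+* R) (g : Polynomial S) (m : ℕ) :
    (uSeq g m).map φ = uSeq (g.map φ) m := by
  induction m with
  | zero => simp [uSeq_zero]
  | succ m ih =>
    rw [uSeq_succ, uSeq_succ, Polynomial.map_add, Polynomial.map_mul, ← derivative_map,
      ← derivative_map, ih]

lemma uSeq_of_deriv_zero {g : Polynomial S} (hg : derivative g = 0) {m : ℕ} (hm : m ≠ 0) :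
    uSeq g m = 0 := by
  induction m with
  | zero => exact absurd rfl hm
  | succ m ih =>
    rw [uSeq_succ, hg, zero_mul, add_zero]
    rcases Nat.eq_zero_or_pos m with h | h
    · subst h; simp [uSeq_zero]
    · rw [ih (by omega), map_zero]

/-- Convolution formula. -/
lemma uSeq_add (g h : Polynomial S) (m : ℕ) :
    uSeq (g + h) m = ∑ j ∈ range (m + 1), m.choose j • (uSeq g j * uSeq h (m - j)) := by
  set Φ : Polynomial S →+* Polynomial S := RingHom.id _ with hΦ'
  set Ψ : Polynomial S →+ Polynomial S :=
    (derivative : Polynomial S →ₗ[S] Polynomial S).toAddMonoidHom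
      + AddMonoidHom.mulLeft (derivative (g + h)) with hΨ
  have happ : ∀ q, Ψ q = derivative q + derivative (g + h) * q := by
    intro q
    simp [hΨ]
  have step : ∀ m j, j ≤ m →
      Ψ (uSeq g j * uSeq h (m - j))
        = uSeq g j * uSeq h (m + 1 - j) + uSeq g (j + 1) * uSeq h (m + 1 - (j + 1)) := by
    intro m j hj
    have h1 : m + 1 - j = (m - j) + 1 := by omega
    have h2 : m + 1 - (j + 1) = m - j := by omega
    rw [h1, h2, happ, derivative_mul, derivative_add, uSeq_succ, uSeq_succ]
    ring
  have hiter : ∀ m, Ψ^[m] (1 : Polynomial S) = uSeq (g + h) m := by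
    intro m
    induction m with
    | zero => simp [uSeq_zero]
    | succ m ih =>
      rw [Function.iterate_succ_apply', ih, happ, uSeq_succ]
  have := binom_rec Ψ (fun m j => uSeq g j * uSeq h (m - j)) step m
  rw [show uSeq g 0 * uSeq h (0 - 0) = (1 : Polynomial S) from by simp [uSeq_zero],
    hiter] at this
  exact this

end USeq

section CharPStuff

variable {p : ℕ} [Fact p.Prime] {S : Type*} [CommRing S] [CharP S p]

lemma opPow_p (g : Polynomial S) :
    ((derivative : Module.End S (Polynomial S)) + LinearMap.mulLeft S (derivative g)) ^ p
      = (derivative : Module.End S (Polynomial S)) ^ p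
        + LinearMap.mulLeft S (uSeq g p) := by
  rw [opExpand, sum_choose_p S
    (fun j => LinearMap.mulLeft S (uSeq g j) *
      (derivative : Module.End S (Polynomial S)) ^ (p - j))]
  rw [uSeq_zero, Nat.sub_zero, Nat.sub_self, pow_zero, mul_one, LinearMap.mulLeft_one,
    ← Module.End.one_eq_id, one_mul]

lemma uSeq_add_p (g h : Polynomial S) :
    uSeq (g + h) p = uSeq g p + uSeq h p := by
  rw [uSeq_add, sum_choose_p S (fun j => uSeq g j * uSeq h (p - j))]
  rw [uSeq_zero, Nat.sub_zero, Nat.sub_self, uSeq_zero, one_mul, mul_one, add_comm]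

lemma iterate_deriv_p_self (f : Polynomial S) :
    ((derivative : Module.End S (Polynomial S)) ^ p) f = 0 := by
  induction f using Polynomial.induction_on' with
  | add f g hf hg => rw [map_add, hf, hg, add_zero]
  | monomial m c =>
    rw [Module.End.pow_apply, ← C_mul_X_pow_eq_monomial, iterate_derivative_C_mul,
      iterate_derivative_X_pow_eq_C_mul]
    have hdvd : p ∣ m.descFactorial p := by
      rw [Nat.descFactorial_eq_factorial_mul_choose]
      exact Dvd.dvd.mul_right (Nat.dvd_factorial (Fact.out : p.Prime).pos le_rfl) _
    rw [show ((m.descFactorial p : S)) = 0 from (CharP.cast_eq_zero_iff S p _).mpr hdvd]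
    simp

/-- derivative of `uSeq g p` vanishes in characteristic p. -/
lemma deriv_uSeq_p (g : Polynomial S) : derivative (uSeq g p) = 0 := by
  have hp : p.Prime := Fact.out
  set D : Module.End S (Polynomial S) := (derivative : Module.End S (Polynomial S)) with hD
  set A : Module.End S (Polynomial S) := D + LinearMap.mulLeft S (derivative g) with hA
  have h3 : A ^ p = D ^ p + LinearMap.mulLeft S (uSeq g p) := opPow_p g
  have hA1 : A 1 = derivative g := by
    simp [hA, hD, LinearMap.mulLeft_apply]
  have hDp1 : (D ^ p) (1 : Polynomial S) = 0 := iterate_deriv_p_self 1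
  have e : (A ^ p) (A 1) = A ((A ^ p) 1) := by
    rw [← Module.End.mul_apply, ← Module.End.mul_apply, ← pow_succ, ← pow_succ']
  rw [hA1, h3] at e
  simp only [LinearMap.add_apply, LinearMap.mulLeft_apply, hDp1, mul_one, zero_add] at e
  rw [iterate_deriv_p_self (derivative g), zero_add] at e
  -- e : uSeq g p * derivative g = A (uSeq g p)
  have e2 : uSeq g p * derivative g
      = derivative (uSeq g p) + derivative g * uSeq g p := by
    rw [e, hA, hD]
    simp [LinearMap.mulLeft_apply]
  linear_combination -e2

end CharPStuff

section Universal

variable (p n : ℕ) [Fact p.Prime]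

/-- The universal monomial `a·xⁿ` over `(ZMod p)[a]`. -/
noncomputable def g0 : Polynomial (Polynomial (ZMod p)) := C X * X ^ n

/-- Leading coefficient object: `n·a`. -/
noncomputable def c0 : Polynomial (ZMod p) := C (n : ZMod p) * X

lemma deriv_g0 : derivative (g0 p n) = C (c0 p n) * X ^ (n - 1) := by
  rw [g0, derivative_C_mul, derivative_X_pow, c0,
    show ((n : Polynomial (ZMod p))) = C ((n : ZMod p)) by simp, map_mul]
  ring

lemma iso (hn : n ≠ 0) (m : ℕ) : ∀ E K : ℕ,
    (((uSeq (g0 p n) m).coeff E).coeff K ≠ 0) → n * K = m + E := by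
  induction m with
  | zero =>
    intro E K h
    rw [uSeq_zero, coeff_one] at h
    by_cases hE : E = 0
    · subst hE
      rw [if_pos rfl, coeff_one] at h
      by_cases hK : K = 0
      · subst hK; simp
      · rw [if_neg hK] at h; exact absurd rfl h
    · rw [if_neg hE] at h; simp at h
  | succ m ih =>
    intro E K h
    rw [uSeq_succ, coeff_add, coeff_add] at h
    have hsplit : ((derivative (uSeq (g0 p n) m)).coeff E).coeff K ≠ 0
        ∨ ((derivative (g0 p n) * uSeq (g0 p n) m).coeff E).coeff K ≠ 0 := by
      by_contra hc
      push_neg at hc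
      rw [hc.1, hc.2, add_zero] at h
      exact h rfl
    rcases hsplit with h1 | h1
    · rw [coeff_derivative] at h1
      have hcast : ((E : Polynomial (ZMod p)) + 1) = C ((E : ZMod p) + 1) := by
        rw [map_add, map_one, map_natCast]
      rw [hcast, coeff_mul_C] at h1
      have := ih (E + 1) K (left_ne_zero_of_mul h1)
      omega
    · rw [deriv_g0, show C (c0 p n) * X ^ (n - 1) * uSeq (g0 p n) m
          = C (c0 p n) * (uSeq (g0 p n) m * X ^ (n - 1)) from by ring,
        coeff_C_mul, coeff_mul_X_pow'] at h1
      by_cases hle : n - 1 ≤ E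
      · rw [if_pos hle, c0, show C ((n : ZMod p)) * X * ((uSeq (g0 p n) m).coeff (E - (n - 1)))
            = C ((n : ZMod p)) * (((uSeq (g0 p n) m).coeff (E - (n - 1))) * X ^ 1) from by ring,
          coeff_C_mul, coeff_mul_X_pow'] at h1
        by_cases hK : 1 ≤ K
        · rw [if_pos hK] at h1
          have hin := ih (E - (n - 1)) (K - 1) (right_ne_zero_of_mul h1)
          obtain ⟨K', rfl⟩ : ∃ K', K = K' + 1 := ⟨K - 1, by omega⟩
          obtain ⟨E', rfl⟩ : ∃ E', E = E' + (n - 1) := ⟨E - (n - 1), by omega⟩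
          obtain ⟨n', rfl⟩ : ∃ n', n = n' + 1 := ⟨n - 1, by omega⟩
          simp only [Nat.add_sub_cancel] at hin
          rw [Nat.mul_succ, hin]
          omega
        · rw [if_neg hK, mul_zero] at h1; exact absurd rfl h1
      · rw [if_neg hle, mul_zero] at h1
        simp at h1

lemma deg_le (m : ℕ) : (uSeq (g0 p n) m).natDegree ≤ m * (n - 1) := by
  induction m with
  | zero => simp [uSeq_zero]
  | succ m ih =>
    rw [uSeq_succ]
    have h2 : (m + 1) * (n - 1) = m * (n - 1) + (n - 1) := by ring
    refine le_trans (natDegree_add_le _ _) (max_le ?_ ?_)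
    · refine le_trans (natDegree_derivative_le _) ?_
      omega
    · refine le_trans (natDegree_mul_le) ?_
      have h1 : (derivative (g0 p n)).natDegree ≤ n - 1 := by
        rw [deriv_g0]
        refine le_trans (natDegree_C_mul_le _ _) ?_
        simp [natDegree_X_pow]
      omega

lemma top_coeff (m : ℕ) : (uSeq (g0 p n) m).coeff (m * (n - 1)) = (c0 p n) ^ m := by
  induction m with
  | zero => simp [uSeq_zero]
  | succ m ih =>
    have h2 : (m + 1) * (n - 1) = m * (n - 1) + (n - 1) := by ring
    rw [uSeq_succ, coeff_add, coeff_derivative]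
    have hz : (uSeq (g0 p n) m).coeff ((m + 1) * (n - 1) + 1) = 0 := by
      apply coeff_eq_zero_of_natDegree_lt
      have := deg_le p n m
      omega
    rw [hz, zero_mul, zero_add, deriv_g0,
      show C (c0 p n) * X ^ (n - 1) * uSeq (g0 p n) m
        = C (c0 p n) * (uSeq (g0 p n) m * X ^ (n - 1)) from by ring,
      coeff_C_mul, coeff_mul_X_pow']
    rw [if_pos (by omega : n - 1 ≤ (m + 1) * (n - 1)),
      show (m + 1) * (n - 1) - (n - 1) = m * (n - 1) from by omega, ih]
    ring

lemma univ_case (hn : ¬ p ∣ n) : uSeq (g0 p n) p = (derivative (g0 p n)) ^ p := by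
  have hp : p.Prime := Fact.out
  have hn0 : n ≠ 0 := by rintro rfl; exact hn (dvd_zero p)
  rw [deriv_g0, mul_pow, ← C_pow, ← pow_mul]
  apply Polynomial.ext
  intro E
  rw [coeff_C_mul, coeff_X_pow]
  by_cases hE : E = (n - 1) * p
  · subst hE
    rw [if_pos rfl, mul_one, show (n - 1) * p = p * (n - 1) from Nat.mul_comm _ _,
      top_coeff]
  · rw [if_neg hE, mul_zero]
    by_cases hpE : p ∣ E
    · by_cases hdeg : (n - 1) * p < E
      · apply coeff_eq_zero_of_natDegree_lt
        have hdl := deg_le p n p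
        have hc2 : p * (n - 1) = (n - 1) * p := Nat.mul_comm _ _
        omega
      · by_contra hne
        obtain ⟨K, hK⟩ : ∃ K, ((uSeq (g0 p n) p).coeff E).coeff K ≠ 0 := by
          by_contra hc; push_neg at hc
          exact hne (Polynomial.ext fun K => by rw [hc K, coeff_zero])
        have hiso := iso p n hn0 p E K hK
        have hd1 : p ∣ n * K := by rw [hiso]; exact Dvd.dvd.add dvd_rfl hpE
        have hd2 : p ∣ K := (hp.dvd_mul.mp hd1).resolve_left hn
        have hKp : K < p := by
          have hnp : (n - 1) * p + p = n * p := by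
            obtain ⟨n', rfl⟩ : ∃ n', n = n' + 1 := ⟨n - 1, by omega⟩
            simp [Nat.succ_mul]
          have hlt : n * K < n * p := by omega
          exact lt_of_mul_lt_mul_left hlt (Nat.zero_le n)
        have hK0 : K = 0 := Nat.eq_zero_of_dvd_of_lt hd2 hKp
        subst hK0
        simp at hiso
        have := hp.pos
        omega
    · have hd : derivative (uSeq (g0 p n) p) = 0 := deriv_uSeq_p _
      have hE1 : E ≠ 0 := by rintro rfl; exact hpE (dvd_zero p)
      have hcoeff := congrArg (fun q => q.coeff (E - 1)) hd
      simp only [coeff_derivative, coeff_zero] at hcoeff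
      rw [show E - 1 + 1 = E from by omega] at hcoeff
      have hcast : (((E - 1 : ℕ) : Polynomial (ZMod p)) + 1) = C ((E : ZMod p)) := by
        rw [map_natCast (C : ZMod p →+* Polynomial (ZMod p)) E]
        rw [show E = (E - 1) + 1 from by omega]
        push_cast
        ring
      rw [hcast] at hcoeff
      rcases mul_eq_zero.mp hcoeff with h | h
      · exact h
      · exfalso
        rw [C_eq_zero, ZMod.natCast_eq_zero_iff] at h
        exact hpE h

end Universal

section Main

variable (p : ℕ) [Fact p.Prime] {R : Type*} [CommRing R] [CharP R p]

lemma uSeq_p_eq (g : Polynomial R) : uSeq g p = (derivative g) ^ p := by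
  have hp : p.Prime := Fact.out
  induction g using Polynomial.induction_on' with
  | add f g hf hg =>
    rw [uSeq_add_p, hf, hg, derivative_add, add_pow_char]
  | monomial m c =>
    rw [← C_mul_X_pow_eq_monomial]
    by_cases hd : p ∣ m
    · have hder : derivative (C c * X ^ m : Polynomial R) = 0 := by
        rw [derivative_C_mul, derivative_X_pow,
          show ((m : R)) = 0 from (CharP.cast_eq_zero_iff R p m).mpr hd]
        simp
      rw [uSeq_of_deriv_zero hder hp.ne_zero, hder, zero_pow hp.ne_zero]
    · set φ : Polynomial (ZMod p) →+* R := eval₂RingHom (ZMod.castHom dvd_rfl R) c with hφ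
      have hg0 : (g0 p m).map φ = C c * X ^ m := by
        rw [g0, Polynomial.map_mul, Polynomial.map_pow, map_X, map_C]
        congr 2
        rw [hφ]
        simp
      calc uSeq (C c * X ^ m) p = uSeq ((g0 p m).map φ) p := by rw [hg0]
        _ = ((uSeq (g0 p m) p)).map φ := (uSeq_map φ _ p).symm
        _ = ((derivative (g0 p m)) ^ p).map φ := by rw [univ_case p m hd]
        _ = ((derivative (g0 p m)).map φ) ^ p := by rw [Polynomial.map_pow]
        _ = (derivative ((g0 p m).map φ)) ^ p := by rw [derivative_map]
        _ = (derivative (C c * X ^ m)) ^ p := by rw [hg0]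

end Main

/-- Over a commutative ring `R` of characteristic `p`, for any polynomial
`g ∈ R[x]` one has `(d/dx + g')^p = (d/dx)^p + (g')^p` in the ring of `R`-linear
differential operators on `R[x]`, where `g' = dg/dx` (acting as a multiplication
operator). -/
theorem stmt7 (p : ℕ) [Fact p.Prime] (R : Type*) [CommRing R] [CharP R p]
    (g : Polynomial R) :
    ((Polynomial.derivative : Module.End R (Polynomial R)) +
        LinearMap.mulLeft R (Polynomial.derivative g)) ^ p =
      (Polynomial.derivative : Module.End R (Polynomial R)) ^ p +
        (LinearMap.mulLeft R (Polynomial.derivative g)) ^ p := by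
  rw [opPow_p, uSeq_p_eq, LinearMap.pow_mulLeft]
end

section
/- In the expansion of (d/dx + g')^p over ℤ, all multinomial coefficients p!/(i! Π_j (j!)^{a_j} Π_j a_j!) indexed by (i; a_1,…,a_p) with i + Σ_j j·a_j = p are divisible by p, except exactly three terms: (i = p, all a_j = 0), (i = 0, a_1 = p), and (i = 0, a_p = 1), whose coefficients are each congruent to 1 mod p. -/
open Finset

/-- In the expansion of `(d/dx + g')^p` over `ℤ`, all multinomial coefficients
`p!/(i!·Π_j (j!)^{a_j}·Π_j a_j!)` indexed by `(i; a_1,…,a_p)` with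
`i + Σ_j j·a_j = p` are divisible by `p`, except exactly the three terms
`(i = p, all a_j = 0)`, `(i = 0, a_1 = p)` and `(i = 0, a_p = 1)`, whose
coefficients are each congruent to `1 mod p`.  Here `a : Fin p → ℕ` encodes
`a_{j+1} := a j`. -/
theorem stmt9 (p : ℕ) [Fact p.Prime] (i : ℕ) (a : Fin p → ℕ)
    (hconstr : i + ∑ j : Fin p, ((j : ℕ) + 1) * a j = p) :
    ((i = p ∧ a = fun _ => 0) ∨
        (i = 0 ∧ a = fun j : Fin p => if (j : ℕ) = 0 then p else 0) ∨
        (i = 0 ∧ a = fun j : Fin p => if (j : ℕ) = p - 1 then 1 else 0) →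
      Nat.ModEq p
        (p.factorial /
          (i.factorial * (∏ j : Fin p, ((j : ℕ) + 1).factorial ^ a j) *
            ∏ j : Fin p, (a j).factorial)) 1) ∧
    (¬((i = p ∧ a = fun _ => 0) ∨
        (i = 0 ∧ a = fun j : Fin p => if (j : ℕ) = 0 then p else 0) ∨
        (i = 0 ∧ a = fun j : Fin p => if (j : ℕ) = p - 1 then 1 else 0)) →
      p ∣ p.factorial /
        (i.factorial * (∏ j : Fin p, ((j : ℕ) + 1).factorial ^ a j) *
          ∏ j : Fin p, (a j).factorial)) := by
  have hp : p.Prime := Fact.out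
  have hp0 : 0 < p := hp.pos
  have hp2 : 2 ≤ p := hp.two_le
  -- each single term is at most p
  have htermle : ∀ j : Fin p, ((j : ℕ) + 1) * a j ≤ p := by
    intro j
    have h1 : ((j : ℕ) + 1) * a j ≤ ∑ k : Fin p, ((k : ℕ) + 1) * a k :=
      Finset.single_le_sum (f := fun k : Fin p => ((k : ℕ) + 1) * a k)
        (fun _ _ => Nat.zero_le _) (Finset.mem_univ j)
    omega
  -- if a single term equals p, everything else vanishes
  have hkey : ∀ j0 : Fin p, ((j0 : ℕ) + 1) * a j0 = p →
      i = 0 ∧ ∀ k : Fin p, k ≠ j0 → a k = 0 := by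
    intro j0 hj0
    rw [← Finset.sum_erase_add _ _ (Finset.mem_univ j0), hj0] at hconstr
    have hi : i = 0 := by omega
    have hrest : ∑ k ∈ Finset.univ.erase j0, ((k : ℕ) + 1) * a k = 0 := by omega
    refine ⟨hi, fun k hk => ?_⟩
    have h0 := (Finset.sum_eq_zero_iff.mp hrest) k
      (Finset.mem_erase.mpr ⟨hk, Finset.mem_univ k⟩)
    rcases Nat.mul_eq_zero.mp h0 with h | h
    · omega
    · exact h
  -- denominator divides p!
  have hDdvd : i.factorial * (∏ j : Fin p, ((j : ℕ) + 1).factorial ^ a j) *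
      (∏ j : Fin p, (a j).factorial) ∣ p.factorial := by
    have h1 : ∀ j : Fin p, ((j : ℕ) + 1).factorial ^ a j * (a j).factorial ∣
        (a j * ((j : ℕ) + 1)).factorial := by
      intro j
      refine ⟨Nat.uniformBell (a j) ((j : ℕ) + 1), ?_⟩
      rw [← Nat.uniformBell_mul_eq (a j) (Nat.succ_ne_zero (j : ℕ))]
      ring
    have h2 : (∏ j : Fin p, ((j : ℕ) + 1).factorial ^ a j) *
        (∏ j : Fin p, (a j).factorial) ∣
        ∏ j : Fin p, (a j * ((j : ℕ) + 1)).factorial := by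
      rw [← Finset.prod_mul_distrib]
      exact Finset.prod_dvd_prod_of_dvd _ _ (fun j _ => h1 j)
    have h3 : ∏ j : Fin p, (a j * ((j : ℕ) + 1)).factorial ∣
        (∑ j : Fin p, a j * ((j : ℕ) + 1)).factorial :=
      Nat.prod_factorial_dvd_factorial_sum _ _
    have h4 : i.factorial * (∑ j : Fin p, a j * ((j : ℕ) + 1)).factorial ∣ p.factorial := by
      have h5 := Nat.factorial_mul_factorial_dvd_factorial_add i
        (∑ j : Fin p, a j * ((j : ℕ) + 1))
      have h7 : ∑ j : Fin p, a j * ((j : ℕ) + 1) = ∑ j : Fin p, ((j : ℕ) + 1) * a j :=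
        Finset.sum_congr rfl fun j _ => mul_comm _ _
      have h6 : i + ∑ j : Fin p, a j * ((j : ℕ) + 1) = p := by rw [h7]; exact hconstr
      exact h5.trans (dvd_of_eq (by rw [h6]))
    calc i.factorial * (∏ j : Fin p, ((j : ℕ) + 1).factorial ^ a j) *
          (∏ j : Fin p, (a j).factorial)
        ∣ i.factorial * (∑ j : Fin p, a j * ((j : ℕ) + 1)).factorial := by
          rw [mul_assoc]
          exact mul_dvd_mul_left _ (h2.trans h3)
      _ ∣ p.factorial := h4
  constructor
  · -- exceptional cases: coefficient is exactly 1
    rintro (⟨hi, ha⟩ | ⟨hi, ha⟩ | ⟨hi, ha⟩)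
    · subst hi; subst ha
      simp only [pow_zero, Finset.prod_const_one, Nat.factorial_zero, mul_one]
      rw [Nat.div_self (Nat.factorial_pos _)]
    · subst hi; subst ha
      have hz : (∏ j : Fin p, ((j : ℕ) + 1).factorial ^
          (if (j : ℕ) = 0 then p else 0)) = 1 := by
        refine Finset.prod_eq_one fun j _ => ?_
        split
        · next h => simp [h]
        · simp
      have hz2 : (∏ j : Fin p, (if (j : ℕ) = 0 then p else 0).factorial) = p.factorial := by
        rw [Finset.prod_eq_single (⟨0, hp0⟩ : Fin p) (fun k _ hk => ?_) (by simp)]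
        · simp
        · have : (k : ℕ) ≠ 0 := fun h => hk (Fin.ext h)
          simp [this]
      rw [hz, hz2]
      simp only [Nat.factorial_zero, one_mul, mul_one]
      rw [Nat.div_self (Nat.factorial_pos _)]
    · subst hi; subst ha
      have hz : (∏ j : Fin p, ((j : ℕ) + 1).factorial ^
          (if (j : ℕ) = p - 1 then 1 else 0)) = p.factorial := by
        rw [Finset.prod_eq_single (⟨p - 1, by omega⟩ : Fin p) (fun k _ hk => ?_) (by simp)]
        · have : (p - 1 : ℕ) + 1 = p := by omega
          simp [this]
        · have : (k : ℕ) ≠ p - 1 := fun h => hk (Fin.ext h)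
          simp [this]
      have hz2 : (∏ j : Fin p, (if (j : ℕ) = p - 1 then 1 else 0).factorial) = 1 := by
        refine Finset.prod_eq_one fun j _ => ?_
        split <;> simp
      rw [hz, hz2]
      simp only [Nat.factorial_zero, one_mul, mul_one]
      rw [Nat.div_self (Nat.factorial_pos _)]
  · -- generic case: p divides the coefficient
    intro h
    push_neg at h
    obtain ⟨h1, h2, h3⟩ := h
    -- i < p
    have hi : i < p := by
      rcases Nat.lt_or_ge i p with h | h
      · exact h
      · exfalso
        have hip : i = p := by omega
        apply h1 hip
        funext k
        have hrest : ∑ k : Fin p, ((k : ℕ) + 1) * a k = 0 := by omega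
        have h0 := (Finset.sum_eq_zero_iff.mp hrest) k (Finset.mem_univ k)
        rcases Nat.mul_eq_zero.mp h0 with h' | h'
        · omega
        · exact h'
    -- a j < p for all j
    have halt : ∀ j : Fin p, a j < p := by
      intro j
      by_contra hc
      push_neg at hc
      have hle := htermle j
      have hle2 : a j ≤ ((j : ℕ) + 1) * a j := Nat.le_mul_of_pos_left _ (by omega)
      have haj : a j = p := by omega
      rw [haj] at hle
      have hj0 : (j : ℕ) = 0 := by
        by_contra hne
        have h2' : 2 ≤ (j : ℕ) + 1 := by omega
        have := Nat.mul_le_mul_right p h2'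
        omega
      have hterm : ((j : ℕ) + 1) * a j = p := by rw [hj0, haj]; omega
      obtain ⟨hi0, hrest⟩ := hkey j hterm
      apply h2 hi0
      funext k
      by_cases hkj : k = j
      · subst hkj; simp [hj0, haj]
      · have : (k : ℕ) ≠ 0 := by
          intro hk0
          exact hkj (Fin.ext (by omega))
        simp [this, hrest k hkj]
    -- a at p-1 is zero
    have hatop : a ⟨p - 1, by omega⟩ = 0 := by
      by_contra hc
      set j : Fin p := ⟨p - 1, by omega⟩ with hj
      have hjv : (j : ℕ) = p - 1 := rfl
      have hle := htermle j
      rw [hjv, show p - 1 + 1 = p from by omega] at hle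
      have haj : a j = 1 := by
        have h1' : a j ≤ 1 := Nat.le_of_mul_le_mul_left (by simpa using hle) hp0
        omega
      have hterm : ((j : ℕ) + 1) * a j = p := by rw [hjv, haj]; omega
      obtain ⟨hi0, hrest⟩ := hkey j hterm
      apply h3 hi0
      funext k
      by_cases hkj : k = j
      · subst hkj; simp [hjv, haj]
      · have : (k : ℕ) ≠ p - 1 := by
          intro hk0
          exact hkj (Fin.ext (by omega))
        simp [this, hrest k hkj]
    -- p does not divide the denominator
    have hnd : ¬ p ∣ i.factorial * (∏ j : Fin p, ((j : ℕ) + 1).factorial ^ a j) *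
        (∏ j : Fin p, (a j).factorial) := by
      intro hdvd
      rcases (Nat.Prime.dvd_mul hp).mp hdvd with hdvd | hdvd
      · rcases (Nat.Prime.dvd_mul hp).mp hdvd with hdvd | hdvd
        · exact absurd ((Nat.Prime.dvd_factorial hp).mp hdvd) (by omega)
        · obtain ⟨j, _, hdj⟩ := (Prime.dvd_finset_prod_iff hp.prime _).mp hdvd
          have hdf : p ∣ ((j : ℕ) + 1).factorial := hp.prime.dvd_of_dvd_pow hdj
          have hle : p ≤ (j : ℕ) + 1 := (Nat.Prime.dvd_factorial hp).mp hdf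
          have hjv : (j : ℕ) = p - 1 := by omega
          have : j = (⟨p - 1, by omega⟩ : Fin p) := Fin.ext hjv
          rw [this, hatop] at hdj
          simp at hdj
          omega
      · obtain ⟨j, _, hdj⟩ := (Prime.dvd_finset_prod_iff hp.prime _).mp hdvd
        have := (Nat.Prime.dvd_factorial hp).mp hdj
        exact absurd this (by have := halt j; omega)
    -- conclude
    obtain ⟨q, hq⟩ := hDdvd
    have hDpos : 0 < i.factorial * (∏ j : Fin p, ((j : ℕ) + 1).factorial ^ a j) *
        (∏ j : Fin p, (a j).factorial) := by positivity
    rw [hq, Nat.mul_div_cancel_left _ hDpos]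
    have hpp : p ∣ p.factorial := Nat.dvd_factorial hp0 le_rfl
    rw [hq] at hpp
    rcases (Nat.Prime.dvd_mul hp).mp hpp with h | h
    · exact absurd h hnd
    · exact h
end

section
/- In the truncated polynomial ring k[x]/(x^p) over a field k of characteristic p, the operators X (multiplication by x) and D (formal derivative d/dx) satisfy DX - XD = 1, X^p = 0, D^p = 0, and the k-subalgebra of End_k(k[x]/(x^p)) generated by X and D is all of End_k(k[x]/(x^p)). -/
/-!
On the basis `xˡ` (`l < p`), `Xⁱ Dʲ` sends `xˡ` to `l(l-1)⋯(l-j+1) x^(i+l-j)`. Hence `Xⁱ D^(p-1)`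
kills every `xˡ` except `x^(p-1)` and is `(p-1)!` times the matrix unit `E_{i,p-1}`, while
`X^(p-1) Dʲ` kills `xˡ` for `l < j` (vanishing falling factorial) and for `l > j` (degree `≥ p`),
so it is `j!` times `E_{p-1,j}`. Factorials below `p` are units in `k`, so every matrix unit
`E_{i,j} = E_{i,p-1} E_{p-1,j}` lies in the algebra generated by `X` and `D`. Finally `D^p = 0`
because the `p`-th derivative of `xⁿ` carries the factor `n(n-1)⋯(n-p+1)`, a multiple of `p!`.
-/

open Polynomial

theorem Module.Basis.end_mul_end {R M ι : Type*} [CommRing R] [AddCommGroup M] [Module R M]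
    [Fintype ι] [DecidableEq ι] (b : Module.Basis ι R M) (i j l : ι) :
    b.end (i, j) * b.end (j, l) = b.end (i, l) :=
  b.ext fun m => by
    by_cases h : l = m <;> simp [Module.Basis.end_apply_apply, h]

theorem Subalgebra.eq_top_of_basis_end_mem {R M ι : Type*} [CommRing R] [AddCommGroup M]
    [Module R M] [Fintype ι] [DecidableEq ι] (S : Subalgebra R (Module.End R M))
    (b : Module.Basis ι R M) (h : ∀ ij, b.end ij ∈ S) : S = ⊤ :=
  eq_top_iff.2 fun f _ => by
    rw [← b.end.sum_repr f]
    exact sum_mem fun ij _ => S.smul_mem (h ij) _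

noncomputable section

variable {R : Type*} [CommRing R]

abbrev idealXPow (R : Type*) [CommRing R] (n : ℕ) : Ideal R[X] := Ideal.span {X ^ n}

theorem mk_X_pow_eq_zero {n m : ℕ} (h : n ≤ m) :
    Ideal.Quotient.mk (idealXPow R n) (X ^ m) = 0 :=
  Ideal.Quotient.eq_zero_iff_mem.2 (Ideal.mem_span_singleton.2 (pow_dvd_pow X h))

section CharP

variable (p : ℕ) [CharP R p]

theorem derivative_mem_idealXPow {f : R[X]} (hf : f ∈ idealXPow R p) :
    derivative f ∈ idealXPow R p := by
  obtain ⟨g, rfl⟩ := Ideal.mem_span_singleton.1 hf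
  rw [derivative_mul, derivative_X_pow, CharP.cast_eq_zero R p, C_0, zero_mul, zero_mul,
    zero_add]
  exact Ideal.mul_mem_right _ _ (Ideal.mem_span_singleton_self _)

def truncDeriv : Module.End R (R[X] ⧸ idealXPow R p) :=
  (Submodule.Quotient.restrictScalarsEquiv R (idealXPow R p)).conj
    (((idealXPow R p).restrictScalars R).mapQ _ (derivative : R[X] →ₗ[R] R[X])
      fun _ => derivative_mem_idealXPow p)

theorem truncDeriv_mk (f : R[X]) :
    truncDeriv p (Ideal.Quotient.mk (idealXPow R p) f) =
      Ideal.Quotient.mk (idealXPow R p) (derivative f) := rfl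

theorem truncDeriv_pow_mk (n : ℕ) (f : R[X]) :
    (truncDeriv p ^ n) (Ideal.Quotient.mk (idealXPow R p) f) =
      Ideal.Quotient.mk (idealXPow R p) (derivative^[n] f) := by
  induction n generalizing f with
  | zero => rfl
  | succ n ih => rw [pow_succ, Module.End.mul_apply, truncDeriv_mk, ih,
      Function.iterate_succ_apply]

theorem iterate_derivative_eq_zero_of_charP [NeZero p] (f : R[X]) : derivative^[p] f = 0 := by
  induction f using Polynomial.induction_on' with
  | add f g hf hg => rw [iterate_map_add, hf, hg, add_zero]
  | monomial n a =>
    have hp : p ∣ n.descFactorial p :=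
      (Nat.dvd_factorial (Nat.pos_of_neZero p) le_rfl).trans (Nat.factorial_dvd_descFactorial n p)
    rw [← C_mul_X_pow_eq_monomial, iterate_derivative_C_mul, iterate_derivative_X_pow_eq_smul,
      (CharP.cast_eq_zero_iff R p _).2 hp, zero_smul, mul_zero]

theorem truncDeriv_pow_self [NeZero p] : truncDeriv (R := R) p ^ p = 0 := by
  refine LinearMap.ext fun v => ?_
  obtain ⟨f, rfl⟩ := Ideal.Quotient.mk_surjective v
  rw [truncDeriv_pow_mk, iterate_derivative_eq_zero_of_charP, map_zero, LinearMap.zero_apply]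

end CharP

def truncX (R : Type*) [CommRing R] (n : ℕ) : Module.End R (R[X] ⧸ idealXPow R n) :=
  LinearMap.mulLeft R (Ideal.Quotient.mk (idealXPow R n) X)

theorem truncX_pow_apply (n m : ℕ) (v : R[X] ⧸ idealXPow R n) :
    (truncX R n ^ m) v = Ideal.Quotient.mk (idealXPow R n) (X ^ m) * v := by
  rw [truncX, LinearMap.pow_mulLeft, LinearMap.mulLeft_apply, map_pow]

theorem truncX_pow_self (n : ℕ) : truncX R n ^ n = 0 :=
  LinearMap.ext fun v => by
    rw [truncX_pow_apply, mk_X_pow_eq_zero le_rfl, zero_mul, LinearMap.zero_apply]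

theorem truncDeriv_mul_truncX_sub (p : ℕ) [CharP R p] :
    truncDeriv p * truncX R p - truncX R p * truncDeriv p = 1 := by
  refine LinearMap.ext fun v => ?_
  obtain ⟨f, rfl⟩ := Ideal.Quotient.mk_surjective v
  simp only [truncX, LinearMap.sub_apply, Module.End.mul_apply, LinearMap.mulLeft_apply,
    Module.End.one_apply, ← map_mul, truncDeriv_mk, derivative_mul, derivative_X, one_mul, map_add]
  ring

theorem truncX_pow_mul_truncDeriv_pow_apply (p : ℕ) [CharP R p] (i j l : ℕ) :
    (truncX R p ^ i * truncDeriv p ^ j : Module.End R _)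
        (Ideal.Quotient.mk (idealXPow R p) (X ^ l)) =
      (l.descFactorial j : R) • Ideal.Quotient.mk (idealXPow R p) (X ^ (i + (l - j))) := by
  rw [Module.End.mul_apply, truncDeriv_pow_mk, iterate_derivative_X_pow_eq_smul, truncX_pow_apply,
    ← Ideal.Quotient.mkₐ_eq_mk R, map_smul, mul_smul_comm, ← map_mul, ← pow_add]

section Basis

variable [Nontrivial R]

def truncBasis (R : Type*) [CommRing R] [Nontrivial R] (n : ℕ) :
    Module.Basis (Fin n) R (R[X] ⧸ idealXPow R n) :=
  (AdjoinRoot.powerBasis' (monic_X_pow (R := R) n)).basis.reindex (finCongr (by simp))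

theorem truncBasis_apply (n : ℕ) (i : Fin n) :
    truncBasis R n i = Ideal.Quotient.mk (idealXPow R n) (X ^ (i : ℕ)) := by
  rw [truncBasis]
  -- `AdjoinRoot (X ^ n)` and `R[X] ⧸ idealXPow R n` agree only up to unfolding instances
  erw [Module.Basis.reindex_apply, PowerBasis.basis_eq_pow]
  exact (map_pow (Ideal.Quotient.mk _) X i).symm

variable (p : ℕ) [CharP R p]

theorem truncX_pow_mul_truncDeriv_pow_pred {t : Fin p} (ht : (t : ℕ) = p - 1) (i : Fin p) :
    truncX R p ^ (i : ℕ) * truncDeriv p ^ (p - 1) =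
      ((p - 1).factorial : R) • (truncBasis R p).end (i, t) := by
  refine (truncBasis R p).ext fun l => ?_
  rw [LinearMap.smul_apply, Module.Basis.end_apply_apply, truncBasis_apply,
    truncX_pow_mul_truncDeriv_pow_apply]
  simp only [Fin.ext_iff, ht]
  rcases (Nat.le_sub_one_of_lt l.isLt).lt_or_eq with hl | hl
  · rw [Nat.descFactorial_eq_zero_iff_lt.2 hl, if_neg (by omega), Nat.cast_zero, zero_smul,
      smul_zero]
  · rw [if_pos hl.symm, hl, Nat.descFactorial_self, Nat.sub_self, add_zero,
      truncBasis_apply]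

theorem truncX_pow_pred_mul_truncDeriv_pow {t : Fin p} (ht : (t : ℕ) = p - 1) (j : Fin p) :
    truncX R p ^ (p - 1) * truncDeriv p ^ (j : ℕ) =
      ((j : ℕ).factorial : R) • (truncBasis R p).end (t, j) := by
  refine (truncBasis R p).ext fun l => ?_
  rw [LinearMap.smul_apply, Module.Basis.end_apply_apply, truncBasis_apply,
    truncX_pow_mul_truncDeriv_pow_apply]
  simp only [Fin.ext_iff]
  rcases lt_trichotomy (l : ℕ) j with hl | hl | hl
  · rw [Nat.descFactorial_eq_zero_iff_lt.2 hl, if_neg (by omega), Nat.cast_zero, zero_smul,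
      smul_zero]
  · rw [if_pos hl.symm, hl, Nat.descFactorial_self, Nat.sub_self, add_zero,
      truncBasis_apply, ht]
  · rw [mk_X_pow_eq_zero (by omega), if_neg (by omega), smul_zero, smul_zero]

end Basis

theorem cast_factorial_ne_zero_of_lt {K : Type*} [Field K] (p : ℕ) [CharP K p] [Fact p.Prime]
    {m : ℕ} (hm : m < p) : (m.factorial : K) ≠ 0 := by
  rw [Ne, CharP.cast_eq_zero_iff K p, Nat.Prime.dvd_factorial Fact.out]
  exact hm.not_ge

theorem adjoin_truncX_truncDeriv (k : Type*) [Field k] (p : ℕ) [CharP k p] [Fact p.Prime] :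
    Algebra.adjoin k {truncX k p, truncDeriv p} = ⊤ := by
  have hX : truncX k p ∈ Algebra.adjoin k {truncX k p, truncDeriv p} :=
    Algebra.subset_adjoin (Set.mem_insert _ _)
  have hD : truncDeriv p ∈ Algebra.adjoin k {truncX k p, truncDeriv p} :=
    Algebra.subset_adjoin (Set.mem_insert_of_mem _ rfl)
  refine Subalgebra.eq_top_of_basis_end_mem _ (truncBasis k p) fun ⟨i, j⟩ => ?_
  let t : Fin p := ⟨p - 1, Nat.sub_one_lt (NeZero.ne p)⟩
  have hc : ((p - 1).factorial * (j : ℕ).factorial : k) ≠ 0 :=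
    mul_ne_zero (cast_factorial_ne_zero_of_lt p t.isLt) (cast_factorial_ne_zero_of_lt p j.isLt)
  have hprod : ((p - 1).factorial * (j : ℕ).factorial : k) •
      ((truncBasis k p).end (i, t) * (truncBasis k p).end (t, j)) =
      (truncX k p ^ (i : ℕ) * truncDeriv p ^ (p - 1)) *
        (truncX k p ^ (p - 1) * truncDeriv p ^ (j : ℕ)) := by
    rw [truncX_pow_mul_truncDeriv_pow_pred p (t := t) rfl,
      truncX_pow_pred_mul_truncDeriv_pow p (t := t) rfl, smul_mul_smul_comm]
  rw [← Module.Basis.end_mul_end _ i t j, ← Subalgebra.mem_toSubmodule,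
    ← Submodule.smul_mem_iff _ hc, Subalgebra.mem_toSubmodule, hprod]
  exact mul_mem (mul_mem (pow_mem hX _) (pow_mem hD _)) (mul_mem (pow_mem hX _) (pow_mem hD _))

end

/-- In the truncated polynomial ring `k[x]/(x^p)` over a field `k` of
characteristic `p`, the operators `X` (multiplication by `x`) and `D` (formal
derivative `d/dx`, characterized by `D (mk f) = mk (f')`) satisfy
`DX - XD = 1`, `X^p = 0`, `D^p = 0`, and the `k`-subalgebra of
`End_k(k[x]/(x^p))` generated by `X` and `D` is all of `End_k(k[x]/(x^p))`. -/
theorem stmt11 (p : ℕ) [Fact p.Prime] (k : Type*) [Field k] [CharP k p] :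
    ∃ D : Module.End k (Polynomial k ⧸ Ideal.span {(Polynomial.X : Polynomial k) ^ p}),
      (∀ f : Polynomial k,
        D (Ideal.Quotient.mk (Ideal.span {(Polynomial.X : Polynomial k) ^ p}) f) =
          Ideal.Quotient.mk (Ideal.span {(Polynomial.X : Polynomial k) ^ p})
            (Polynomial.derivative f)) ∧
      (letI X : Module.End k (Polynomial k ⧸ Ideal.span {(Polynomial.X : Polynomial k) ^ p}) :=
        LinearMap.mulLeft k
          (Ideal.Quotient.mk (Ideal.span {(Polynomial.X : Polynomial k) ^ p}) Polynomial.X)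
      D * X - X * D = 1 ∧ X ^ p = 0 ∧ D ^ p = 0 ∧
        Algebra.adjoin k {X, D} = ⊤) :=
  ⟨truncDeriv p, truncDeriv_mk p, truncDeriv_mul_truncX_sub p, truncX_pow_self p,
    truncDeriv_pow_self p, adjoin_truncX_truncDeriv k p⟩
end

section
/- Let k be a field of characteristic p and F ∈ k[x_1,…,x_n]. The transvection automorphism T_F of the Weyl algebra (fixing x̂_1,…,x̂_n and sending x̂_{n+i} to x̂_{n+i} + ∂_iF(x̂_1,…,x̂_n)) acts on the central elements y_i = x̂_i^p by y_i ↦ y_i and y_{n+i} ↦ y_{n+i} + Fr(∂_iF)(y_1,…,y_n), where Fr(∂_iF) is obtained from ∂_iF by raising all coefficients to the p-th power. -/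
/-!
Since `T` is an algebra map, `T (x̂ᵢ ^ p) = T x̂ᵢ ^ p`, so everything reduces to computing
`(a + b) ^ p` for `a = x̂_{n+i}` and `b = ∂ᵢF(x̂)`. The iterated commutators `(ad a)ᵐ b` are
`(-∂ᵢ)ᵐ ∂ᵢF` evaluated at the commuting `x̂ⱼ`, hence commute with `b`, and
`(ad a)^(p-1) b` vanishes because `∂ᵢ ^ p = 0` in characteristic `p`. Under these two
conditions Jacobson's formula collapses to `(a + b) ^ p = a ^ p + b ^ p`: in `A[t]`, with
`q = a + t b`, the derivative of `q ^ p` is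
`∑ⱼ qʲ b q^(p-1-j) = (ad q)^(p-1) b = (ad a)^(p-1) b = 0`,
so `q ^ p` has no coefficients in degrees `1, …, p - 1`, and one sets `t = 1`. Finally
`b ^ p = Fr(∂ᵢF)(x̂ᵖ)` because `x ↦ x ^ p` is additive on the commutative ring `k[x]`.
-/

open MvPolynomial

/-- `ω_{ij} = δ_{i,n+j} - δ_{n+i,j}` with the `2n` indices encoded as
`Fin n ⊕ Fin n` (`inl i ↔ x̂_i`, `inr i ↔ x̂_{n+i}`). -/
def weylOmegaS (n : ℕ) : (Fin n ⊕ Fin n) → (Fin n ⊕ Fin n) → ℤ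
  | .inl i, .inr j => if i = j then 1 else 0
  | .inr i, .inl j => if i = j then -1 else 0
  | _, _ => 0

/-- The defining relations `x̂_i x̂_j - x̂_j x̂_i = ω_{ij}·1` of the Weyl algebra
`A_{n,k}`. -/
inductive WeylRelS (k : Type*) [Field k] (n : ℕ) :
    FreeAlgebra k (Fin n ⊕ Fin n) → FreeAlgebra k (Fin n ⊕ Fin n) → Prop
  | comm (i j : Fin n ⊕ Fin n) : WeylRelS k n
      (FreeAlgebra.ι k i * FreeAlgebra.ι k j - FreeAlgebra.ι k j * FreeAlgebra.ι k i)
      ((weylOmegaS n i j : ℤ) : FreeAlgebra k (Fin n ⊕ Fin n))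

/-- The Weyl algebra `A_{n,k}`. -/
abbrev WeylAlgS (k : Type*) [Field k] (n : ℕ) := RingQuot (WeylRelS k n)

/-- The generator `x̂_i` of `A_{n,k}`. -/
noncomputable def weylGenS (k : Type*) [Field k] (n : ℕ) (i : Fin n ⊕ Fin n) :
    WeylAlgS k n :=
  RingQuot.mkAlgHom k (WeylRelS k n) (FreeAlgebra.ι k i)

/-- Substitution of the pairwise commuting elements `x̂_1, …, x̂_n` into a
polynomial `G ∈ k[x_1,…,x_n]`: `G(x̂_1,…,x̂_n) = Σ_m coeff_m · Π_i x̂_i^{m_i}`. -/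
noncomputable def weylEvalS (k : Type*) [Field k] (n : ℕ)
    (G : MvPolynomial (Fin n) k) : WeylAlgS k n :=
  ∑ m ∈ G.support, G.coeff m •
    ((List.finRange n).map fun i => weylGenS k n (Sum.inl i) ^ m i).prod

attribute [local instance] LieRing.ofAssociativeRing

theorem Nat.Prime.cast_choose_sub_one {S : Type*} [Ring S] {p : ℕ} (hp : p.Prime)
    (hpS : (p : S) = 0) {j : ℕ} (hj : j < p) : ((p - 1).choose j : S) = (-1) ^ j := by
  induction j with
  | zero => simp
  | succ j ih =>
    have hpascal : p.choose (j + 1) = (p - 1).choose j + (p - 1).choose (j + 1) := by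
      simpa only [Nat.sub_add_cancel hp.one_le] using Nat.choose_succ_succ' (p - 1) j
    have hzero : (p.choose (j + 1) : S) = 0 := by
      obtain ⟨c, hc⟩ := hp.dvd_choose_self j.succ_ne_zero hj
      rw [hc, Nat.cast_mul, hpS, zero_mul]
    rw [hpascal, Nat.cast_add, ih (by omega)] at hzero
    rw [pow_succ, mul_neg_one]
    exact eq_neg_of_add_eq_zero_right hzero

open Finset in
theorem Commute.sub_pow_sub_one_eq_geom_sum₂ {S : Type*} [Ring S] {p : ℕ} (hp : p.Prime)
    (hpS : (p : S) = 0) {a b : S} (h : Commute a b) :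
    (a - b) ^ (p - 1) = ∑ j ∈ range p, a ^ j * b ^ (p - 1 - j) := by
  have hsign : ∀ j < p, (-1 : S) ^ (p - 1 - j) * ((p - 1).choose j : S) = 1 := fun j hj => by
    rw [hp.cast_choose_sub_one hpS hj, ← pow_add, Nat.sub_add_cancel (by omega),
      ← hp.cast_choose_sub_one hpS (by omega : p - 1 < p), Nat.choose_self, Nat.cast_one]
  rw [sub_eq_add_neg, h.neg_right.add_pow, Nat.sub_add_cancel hp.one_le]
  refine sum_congr rfl fun j hj => ?_
  rw [neg_pow', mul_assoc, mul_assoc, hsign j (mem_range.1 hj), mul_one]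

theorem sum_pow_mul_pow_eq_ad_pow {k A : Type*} [Field k] [Ring A] [Algebra k A] (p : ℕ)
    [Fact p.Prime] [CharP k p] (x y : A) :
    ∑ j ∈ Finset.range p, x ^ j * y * x ^ (p - 1 - j) = (LieAlgebra.ad k A x ^ (p - 1)) y := by
  have hp : (p : Module.End k A) = 0 := by
    rw [← map_natCast (algebraMap k (Module.End k A)), CharP.cast_eq_zero, map_zero]
  have had : LieAlgebra.ad k A x = LinearMap.mulLeft k x - LinearMap.mulRight k x := by
    ext z; simp [LieRing.of_associative_ring_bracket]
  rw [had,
    (LinearMap.commute_mulLeft_right x x).sub_pow_sub_one_eq_geom_sum₂ Fact.out hp]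
  simp [LinearMap.pow_mulLeft, LinearMap.pow_mulRight, mul_assoc]

namespace Polynomial

open Finset

variable {A : Type*}

theorem derivative_pow_eq_sum [Semiring A] (q : A[X]) (m : ℕ) :
    derivative (q ^ m) = ∑ j ∈ range m, q ^ j * derivative q * q ^ (m - 1 - j) := by
  induction m with
  | zero => simp
  | succ m ih =>
    rw [pow_succ, derivative_mul, ih, sum_mul, sum_range_succ, Nat.add_sub_cancel, Nat.sub_self,
      pow_zero, mul_one]
    congr 1
    refine sum_congr rfl fun j hj => ?_
    rw [mul_assoc, ← pow_succ, Nat.sub_right_comm, Nat.sub_add_cancel (by simp at hj; omega)]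

theorem coeff_eq_zero_of_derivative_eq_zero {k : Type*} [Field k] [Semiring A] [Algebra k A]
    (p : ℕ) [CharP k p] {q : A[X]} (hq : derivative q = 0) {j : ℕ} (hj : ¬ p ∣ j) :
    q.coeff j = 0 := by
  obtain ⟨i, rfl⟩ : ∃ i, j = i + 1 :=
    Nat.exists_eq_succ_of_ne_zero (by rintro rfl; simp at hj)
  have hunit : IsUnit ((i + 1 : ℕ) : A) := by
    rw [← map_natCast (algebraMap k A)]
    exact (Ne.isUnit ((CharP.cast_eq_zero_iff k p _).not.2 hj)).map _
  have hcoeff := congrArg (coeff · i) hq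
  simp only [coeff_derivative, coeff_zero] at hcoeff
  exact hunit.mul_left_eq_zero.1 (by exact_mod_cast hcoeff)

theorem ad_pow_C_add_C_mul_X {k : Type*} [CommRing k] [Ring A] [Algebra k A] {a b : A}
    (hcomm : ∀ m, Commute b ((LieAlgebra.ad k A a ^ m) b)) (m : ℕ) :
    (LieAlgebra.ad k A[X] (C a + C b * X) ^ m) (C b) = C ((LieAlgebra.ad k A a ^ m) b) := by
  induction m with
  | zero => simp
  | succ m ih =>
    rw [pow_succ', Module.End.mul_apply, ih, pow_succ', Module.End.mul_apply]
    have hb : b * _ = _ * b := hcomm m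
    simp only [LieAlgebra.ad_apply, LieRing.of_associative_ring_bracket, add_mul, mul_add,
      mul_assoc, X_mul_C, ← C_mul, ← mul_assoc (C _), hb, map_sub]
    abel

theorem add_pow_eq_of_coeff_C_add_C_mul_X_pow_eq_zero [Ring A] {a b : A} {n : ℕ} (hn : n ≠ 0)
    (hcoeff : ∀ j, 0 < j → j < n → ((C a + C b * X) ^ n).coeff j = 0) :
    (a + b) ^ n = a ^ n + b ^ n := by
  set q : A[X] := C a + C b * X
  have hdeg : q.natDegree ≤ 1 := by
    simp only [q]; compute_degree
  have hdegn : (q ^ n).natDegree < n + 1 :=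
    Nat.lt_succ_of_le (natDegree_pow_le_of_le n hdeg |>.trans (by rw [mul_one]))
  have hcoeff0 : (q ^ n).coeff 0 = a ^ n := by
    rw [← constantCoeff_apply, map_pow]; simp [q]
  have hcoeffn : (q ^ n).coeff n = b ^ n := by
    simpa [q] using coeff_pow_of_natDegree_le (m := n) hdeg
  let φ : A[X] →+* A := eval₂RingHom' (RingHom.id A) 1 Commute.one_right
  calc (a + b) ^ n = φ q ^ n := by simp [φ, q]
    _ = φ (q ^ n) := (map_pow φ q n).symm
    _ = ∑ j ∈ range (n + 1), (q ^ n).coeff j := by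
      simp [φ, eval₂_eq_sum_range' _ hdegn]
    _ = a ^ n + b ^ n := by
      rw [sum_eq_add 0 n (Ne.symm hn), hcoeff0, hcoeffn]
      · exact fun j hj ⟨hj0, hjn⟩ =>
          hcoeff j (Nat.pos_of_ne_zero hj0) (lt_of_le_of_ne (mem_range_succ_iff.1 hj) hjn)
      · simp
      · simp

end Polynomial

theorem add_pow_char_of_commute_ad_pow {k A : Type*} [Field k] [Ring A] [Algebra k A] (p : ℕ)
    [Fact p.Prime] [CharP k p] {a b : A} (hcomm : ∀ m, Commute b ((LieAlgebra.ad k A a ^ m) b))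
    (hnil : (LieAlgebra.ad k A a ^ (p - 1)) b = 0) :
    (a + b) ^ p = a ^ p + b ^ p := by
  have hderiv : Polynomial.derivative
      ((Polynomial.C a + Polynomial.C b * Polynomial.X) ^ p) = 0 := by
    rw [Polynomial.derivative_pow_eq_sum, show Polynomial.derivative
        (Polynomial.C a + Polynomial.C b * Polynomial.X) = Polynomial.C b by simp,
      sum_pow_mul_pow_eq_ad_pow (k := k), Polynomial.ad_pow_C_add_C_mul_X hcomm, hnil, map_zero]
  exact Polynomial.add_pow_eq_of_coeff_C_add_C_mul_X_pow_eq_zero (Fact.out : p.Prime).ne_zero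
    fun j hj0 hjp => Polynomial.coeff_eq_zero_of_derivative_eq_zero (k := k) p hderiv
      (Nat.not_dvd_of_pos_of_lt hj0 hjp)

namespace MvPolynomial

section aevalOfCommute

variable {σ k A : Type*} [CommRing k] [Ring A] [Algebra k A]

theorem isMulCommutative_adjoin_range {x : σ → A} (hx : ∀ i j, Commute (x i) (x j)) :
    IsMulCommutative (Algebra.adjoin k (Set.range x)) :=
  Algebra.isMulCommutative_adjoin k (by rintro _ ⟨i, rfl⟩ _ ⟨j, rfl⟩; exact hx i j)

open scoped IsMulCommutative in
noncomputable def aevalOfCommute (x : σ → A) (hx : ∀ i j, Commute (x i) (x j)) :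
    MvPolynomial σ k →ₐ[k] A :=
  haveI := isMulCommutative_adjoin_range (k := k) hx
  (Algebra.adjoin k (Set.range x)).val.comp
    (aeval fun i =>
      (⟨x i, Algebra.subset_adjoin ⟨i, rfl⟩⟩ : Algebra.adjoin k (Set.range x)))

variable {x : σ → A} (hx : ∀ i j, Commute (x i) (x j))

@[simp]
theorem aevalOfCommute_X (i : σ) : aevalOfCommute (k := k) x hx (X i) = x i := by
  simp [aevalOfCommute]

open scoped IsMulCommutative in
theorem commute_aevalOfCommute (P Q : MvPolynomial σ k) :
    Commute (aevalOfCommute x hx P) (aevalOfCommute x hx Q) := by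
  have := isMulCommutative_adjoin_range (k := k) hx
  exact (Commute.all _ _).map (Algebra.adjoin k (Set.range x)).val

open scoped IsMulCommutative in
theorem aevalOfCommute_monomial {n : ℕ} {x : Fin n → A} (hx : ∀ i j, Commute (x i) (x j))
    (m : Fin n →₀ ℕ) (c : k) :
    aevalOfCommute x hx (monomial m c) = c • ((List.finRange n).map fun i => x i ^ m i).prod := by
  have := isMulCommutative_adjoin_range (k := k) hx
  rw [monomial_eq, Finsupp.prod_fintype _ _ fun _ => pow_zero _, Fin.prod_univ_def,
    ← smul_eq_C_mul, map_smul]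
  simp [aevalOfCommute, map_list_prod, Function.comp_def]

theorem aevalOfCommute_pow_char {n : ℕ} (p : ℕ) [Fact p.Prime] [CharP k p] {x : Fin n → A}
    (hx : ∀ i j, Commute (x i) (x j)) (G : MvPolynomial (Fin n) k) :
    aevalOfCommute x hx G ^ p = ∑ m ∈ G.support, G.coeff m ^ p •
      ((List.finRange n).map fun i => (x i ^ p) ^ m i).prod := by
  conv_lhs => rw [← map_pow, ← support_sum_monomial_coeff G, sum_pow_char, map_sum]
  refine Finset.sum_congr rfl fun m _ => ?_
  simp only [monomial_pow, aevalOfCommute_monomial, Finsupp.smul_apply, smul_eq_mul, pow_mul]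

end aevalOfCommute

variable {σ k : Type*} [CommSemiring k]

theorem pderiv_pow_monomial (i : σ) (m : ℕ) (s : σ →₀ ℕ) (a : k) :
    ((pderiv (R := k) i : Module.End k (MvPolynomial σ k)) ^ m) (monomial s a) =
      monomial (s - Finsupp.single i m) (a * (s i).descFactorial m) := by
  induction m with
  | zero => simp
  | succ m ih =>
    rw [pow_succ', Module.End.mul_apply, ih, Derivation.coeFn_coe, pderiv_monomial, tsub_tsub,
      ← Finsupp.single_add, Finsupp.tsub_apply, Finsupp.single_eq_same, Nat.descFactorial_succ]
    push_cast
    ring_nf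

theorem pderiv_pow_char (p : ℕ) [Fact p.Prime] [CharP k p] (i : σ) :
    (pderiv (R := k) i : Module.End k (MvPolynomial σ k)) ^ p = 0 := by
  refine linearMap_ext fun s => LinearMap.ext fun a => ?_
  have hdvd : p ∣ (s i).descFactorial p :=
    (Nat.dvd_factorial (Fact.out : p.Prime).pos le_rfl).trans (Nat.factorial_dvd_descFactorial _ _)
  simp [pderiv_pow_monomial, (CharP.cast_eq_zero_iff k p _).2 hdvd]

end MvPolynomial

section WeylAlgebra

variable (k : Type*) [Field k] (n : ℕ)

theorem weylGenS_mul_sub (a b : Fin n ⊕ Fin n) :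
    weylGenS k n a * weylGenS k n b - weylGenS k n b * weylGenS k n a =
      (weylOmegaS n a b : WeylAlgS k n) := by
  simpa [weylGenS] using RingQuot.mkAlgHom_rel k (WeylRelS.comm (k := k) (n := n) a b)

theorem commute_weylGenS_inl (i j : Fin n) :
    Commute (weylGenS k n (.inl i)) (weylGenS k n (.inl j)) :=
  sub_eq_zero.1 (by simpa [weylOmegaS] using weylGenS_mul_sub k n (.inl i) (.inl j))

noncomputable def weylEval : MvPolynomial (Fin n) k →ₐ[k] WeylAlgS k n :=
  aevalOfCommute _ (commute_weylGenS_inl k n)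

theorem weylEvalS_eq_weylEval (G : MvPolynomial (Fin n) k) : weylEvalS k n G = weylEval k n G := by
  conv_rhs => rw [← support_sum_monomial_coeff G, map_sum]
  exact Finset.sum_congr rfl fun m _ => (aevalOfCommute_monomial _ m _).symm

@[simp]
theorem weylEval_X (i : Fin n) : weylEval k n (X i) = weylGenS k n (.inl i) :=
  aevalOfCommute_X _ i

theorem weylEval_pow_char (p : ℕ) [Fact p.Prime] [CharP k p] (G : MvPolynomial (Fin n) k) :
    weylEval k n G ^ p = ∑ m ∈ G.support, G.coeff m ^ p •
      ((List.finRange n).map fun i => (weylGenS k n (.inl i) ^ p) ^ m i).prod :=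
  aevalOfCommute_pow_char p _ G

variable {k n}

theorem commute_weylEval (P Q : MvPolynomial (Fin n) k) :
    Commute (weylEval k n P) (weylEval k n Q) :=
  commute_aevalOfCommute _ P Q

theorem lie_weylGenS_inr_weylEval (i : Fin n) (H : MvPolynomial (Fin n) k) :
    ⁅weylGenS k n (.inr i), weylEval k n H⁆ = weylEval k n (-pderiv i H) := by
  induction H using MvPolynomial.induction_on with
  | C a => simp [Ring.lie_def, ← algebraMap_eq, Algebra.commutes]
  | add H₁ H₂ h₁ h₂ => simp [h₁, h₂, add_comm]
  | mul_X H j ih =>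
    have hX :
        ⁅weylGenS k n (.inr i), weylGenS k n (.inl j)⁆ = weylEval k n (-pderiv i (X j)) := by
      rw [Ring.lie_def, weylGenS_mul_sub]
      rcases eq_or_ne i j with rfl | hij <;> simp [weylOmegaS, *]
    have hleib : ∀ x u v : WeylAlgS k n, ⁅x, u * v⁆ = ⁅x, u⁆ * v + u * ⁅x, v⁆ := by
      intro x u v; simp only [Ring.lie_def, mul_sub, sub_mul, mul_assoc]; abel
    rw [map_mul, hleib, ih, weylEval_X, hX, ← weylEval_X, ← map_mul, ← map_mul, ← map_add,
      pderiv_mul]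
    congr 1
    ring

theorem ad_pow_weylGenS_inr_weylEval (i : Fin n) (m : ℕ) (H : MvPolynomial (Fin n) k) :
    (LieAlgebra.ad k (WeylAlgS k n) (weylGenS k n (.inr i)) ^ m) (weylEval k n H) =
      weylEval k n
        ((((-1 : k) • (pderiv (R := k) i : Module.End k (MvPolynomial (Fin n) k))) ^ m) H) :=
  LinearMap.congr_fun (Module.End.commute_pow_left_of_commute (f := (weylEval k n).toLinearMap)
    (LinearMap.ext fun H => by simp [lie_weylGenS_inr_weylEval]) m) H

end WeylAlgebra

/-- Let `k` be a field of characteristic `p` and `F ∈ k[x_1,…,x_n]`. The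
transvection automorphism `T_F` of the Weyl algebra (fixing `x̂_1,…,x̂_n` and
sending `x̂_{n+i} ↦ x̂_{n+i} + ∂_iF(x̂_1,…,x̂_n)`) acts on the central elements
`y_i = x̂_i^p` by `y_i ↦ y_i` and `y_{n+i} ↦ y_{n+i} + Fr(∂_iF)(y_1,…,y_n)`,
where `Fr(∂_iF)` is obtained from `∂_iF` by raising all coefficients to the
`p`-th power (and substituting `y_j` for `x_j`). -/
theorem stmt14 (p : ℕ) [Fact p.Prime] (k : Type*) [Field k] [CharP k p]
    (n : ℕ) (F : MvPolynomial (Fin n) k) (T : WeylAlgS k n ≃ₐ[k] WeylAlgS k n)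
    (hT : ∀ i : Fin n,
      T (weylGenS k n (Sum.inl i)) = weylGenS k n (Sum.inl i) ∧
      T (weylGenS k n (Sum.inr i)) =
        weylGenS k n (Sum.inr i) + weylEvalS k n (MvPolynomial.pderiv i F)) :
    ∀ i : Fin n,
      T (weylGenS k n (Sum.inl i) ^ p) = weylGenS k n (Sum.inl i) ^ p ∧
      T (weylGenS k n (Sum.inr i) ^ p) =
        weylGenS k n (Sum.inr i) ^ p +
          ∑ m ∈ (MvPolynomial.pderiv i F).support,
            ((MvPolynomial.pderiv i F).coeff m ^ p) •
              ((List.finRange n).map fun j =>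
                (weylGenS k n (Sum.inl j) ^ p) ^ m j).prod := by
  intro i
  obtain ⟨hT_inl, hT_inr⟩ := hT i
  refine ⟨by rw [map_pow, hT_inl], ?_⟩
  set a := weylGenS k n (.inr i)
  set b := weylEval k n (pderiv i F) with hb
  have hcomm : ∀ m, Commute b ((LieAlgebra.ad k _ a ^ m) b) :=
    fun m => by rw [ad_pow_weylGenS_inr_weylEval]; exact commute_weylEval _ _
  have hnil : (LieAlgebra.ad k _ a ^ (p - 1)) b = 0 := by
    rw [ad_pow_weylGenS_inr_weylEval, ← Derivation.coeFn_coe (pderiv i), ← Module.End.mul_apply,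
      smul_pow, smul_mul_assoc, ← pow_succ, Nat.sub_add_cancel (Fact.out : p.Prime).one_le,
      pderiv_pow_char, smul_zero, LinearMap.zero_apply, map_zero]
  rw [map_pow, hT_inr, weylEvalS_eq_weylEval, add_pow_char_of_commute_ad_pow p hcomm hnil, hb,
    weylEval_pow_char]
end

section
/- With the canonical bracket {a,b} := ([ã,b̃]/p mod p) on the center of the Weyl algebra A_{n,ℤ}/p, one has {y_i, y_j} = -ω_{ij} for the central generators y_i = x̂_i^p, where ω_{ij} = δ_{i,n+j} - δ_{n+i,j}. -/
/-- The standard skew-symmetric matrix `ω_{ij} = δ_{i,n+j} - δ_{n+i,j}`. -/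
def weylOmega (n : ℕ) (i j : Fin (2 * n)) : ℤ :=
  (if (i : ℕ) = n + (j : ℕ) then 1 else 0) - (if n + (i : ℕ) = (j : ℕ) then 1 else 0)

/-- The defining relations `x̂_i x̂_j - x̂_j x̂_i = ω_{ij}·1` of the Weyl algebra
of index `n`. -/
inductive WeylRel (R : Type*) [CommRing R] (n : ℕ) :
    FreeAlgebra R (Fin (2 * n)) → FreeAlgebra R (Fin (2 * n)) → Prop
  | comm (i j : Fin (2 * n)) : WeylRel R n
      (FreeAlgebra.ι R i * FreeAlgebra.ι R j - FreeAlgebra.ι R j * FreeAlgebra.ι R i)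
      ((weylOmega n i j : ℤ) : FreeAlgebra R (Fin (2 * n)))

/-- The Weyl algebra of index `n` over `R`. -/
abbrev WeylAlgebra (R : Type*) [CommRing R] (n : ℕ) := RingQuot (WeylRel R n)

/-- The generator `x̂_i` of the Weyl algebra. -/
noncomputable def weylGen (R : Type*) [CommRing R] (n : ℕ) (i : Fin (2 * n)) :
    WeylAlgebra R n :=
  RingQuot.mkAlgHom R (WeylRel R n) (FreeAlgebra.ι R i)

/-!
If `x y - y x = z` with `z ∈ ℤ`, then `ad x` sends `y ^ s` to `s z y ^ (s - 1)`, and expanding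
`x ^ p = (ad x + right multiplication by x) ^ p` gives
`[x ^ p, y ^ p] = ∑_{0 ≤ j < p} (p choose j) (p! / j!) z ^ (p - j) y ^ j x ^ j`.
For `0 < j < p` the coefficient is divisible by `p²`, while the `j = 0` term `p! z ^ p` is
`-p z` modulo `p²` by the theorems of Wilson and Fermat. Hence `p c = [x̂_i ^ p, x̂_j ^ p]` is
`-p ω_{ij}` modulo `p²`, and one may divide by `p` because `A_{n,ℤ}` is torsion free: the ordered
monomials `x ^ a ∂ ^ b` span it, and they are linearly independent, as their action on
`ℤ[x_1, …, x_n]` by multiplication and partial derivatives shows.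
-/

open Finset MvPolynomial
open LinearMap (mulLeft mulRight mulLeft_apply mulRight_apply pow_mulLeft pow_mulRight
  commute_mulLeft_right)
open scoped Nat

section Commutator

variable {R : Type*} [Ring R] {x y : R} {c : ℤ}

lemma mul_pow_sub_pow_mul_of_mul_sub_mul (h : x * y - y * x = c) (s : ℕ) :
    x * y ^ s - y ^ s * x = (s * c : ℤ) • y ^ (s - 1) := by
  induction s with
  | zero => simp
  | succ s ih =>
    have hstep : x * y ^ (s + 1) - y ^ (s + 1) * x
        = (x * y ^ s - y ^ s * x) * y + y ^ s * (x * y - y * x) := by noncomm_ring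
    rw [hstep, ih, h, smul_mul_assoc, ← Int.cast_comm, ← zsmul_eq_mul]
    rcases s with _ | s
    · simp
    · rw [add_tsub_cancel_right, ← pow_succ, ← add_smul]
      push_cast
      ring_nf

lemma ad_pow_apply_pow (h : x * y - y * x = c) (k s : ℕ) :
    ((mulLeft ℤ x - mulRight ℤ x) ^ k) (y ^ s)
      = (s.descFactorial k * c ^ k : ℤ) • y ^ (s - k) := by
  induction k with
  | zero => simp
  | succ k ih =>
    rw [pow_succ', Module.End.mul_apply, ih, map_zsmul, LinearMap.sub_apply, mulLeft_apply,
      mulRight_apply, mul_pow_sub_pow_mul_of_mul_sub_mul h, smul_smul, tsub_tsub,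
      Nat.descFactorial_succ]
    push_cast
    ring_nf

lemma pow_mul_eq_sum_ad_pow (x u : R) (m : ℕ) :
    x ^ m * u = ∑ j ∈ range (m + 1),
      m.choose j • (((mulLeft ℤ x - mulRight ℤ x) ^ (m - j)) u * x ^ j) := by
  set ad := mulLeft ℤ x - mulRight ℤ x
  have hcomm : Commute (mulRight ℤ x) ad :=
    (commute_mulLeft_right x x).symm.sub_right (Commute.refl _)
  rw [← mulLeft_apply (R := ℤ), ← pow_mulLeft, ← add_sub_cancel (mulRight ℤ x) (mulLeft ℤ x),
    hcomm.add_pow, LinearMap.sum_apply]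
  refine Finset.sum_congr rfl fun j _ => ?_
  rw [Module.End.mul_apply, Module.End.mul_apply, Module.End.natCast_apply, map_nsmul,
    pow_mulRight, mulRight_apply, smul_mul_assoc]

lemma pow_mul_pow_sub_pow_mul_pow_eq_sum (h : x * y - y * x = c) (m : ℕ) :
    x ^ m * y ^ m - y ^ m * x ^ m = ∑ j ∈ range m,
      (m.choose j * m.descFactorial (m - j) * c ^ (m - j) : ℤ) • (y ^ j * x ^ j) := by
  rw [pow_mul_eq_sum_ad_pow, Finset.sum_range_succ, Nat.sub_self, pow_zero,
    Module.End.one_apply, Nat.choose_self, one_smul, add_sub_cancel_right]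
  refine Finset.sum_congr rfl fun j hj => ?_
  rw [ad_pow_apply_pow h, Nat.sub_sub_self (Finset.mem_range.mp hj).le, smul_mul_assoc,
    ← natCast_zsmul, smul_smul]
  ring_nf

end Commutator

lemma sq_dvd_factorial_mul_pow_add (p : ℕ) [Fact p.Prime] (c : ℤ) :
    (p : ℤ) ^ 2 ∣ p ! * c ^ p + p * c := by
  have hp := (Fact.out : p.Prime)
  obtain ⟨t, ht⟩ : (p : ℤ) ∣ (p - 1)! * c ^ p + c := by
    rw [← ZMod.intCast_zmod_eq_zero_iff_dvd]
    push_cast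
    rw [ZMod.wilsons_lemma, ZMod.pow_card]
    ring
  refine ⟨t, ?_⟩
  rw [← Nat.mul_factorial_pred hp.ne_zero]
  push_cast
  linear_combination (p : ℤ) * ht

lemma sq_dvd_choose_mul_descFactorial {p j : ℕ} (hp : p.Prime) (hj₀ : 0 < j) (hjp : j < p) :
    p ^ 2 ∣ p.choose j * p.descFactorial (p - j) := by
  obtain ⟨k, hk⟩ : ∃ k, p - j = k + 1 := ⟨p - j - 1, by omega⟩
  obtain ⟨q, rfl⟩ : ∃ q, p = q + 1 := ⟨p - 1, by omega⟩
  rw [sq, hk, Nat.succ_descFactorial_succ]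
  exact Nat.mul_dvd_mul (hp.dvd_choose_self hj₀.ne' hjp) (dvd_mul_right _ _)

theorem exists_pow_mul_pow_sub_pow_mul_pow {R : Type*} [Ring R] (p : ℕ) [Fact p.Prime]
    {x y : R} {c : ℤ} (h : x * y - y * x = c) :
    ∃ e : R, x ^ p * y ^ p - y ^ p * x ^ p = ((-(p * c) : ℤ) : R) + (p ^ 2 : ℤ) • e := by
  have hp := (Fact.out : p.Prime)
  have hcoeff : ∀ j ∈ range p, ∃ t : ℤ, (p.choose j * p.descFactorial (p - j) * c ^ (p - j) : ℤ)
      = p ^ 2 * t - if j = 0 then p * c else 0 := by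
    intro j hj
    rcases Nat.eq_zero_or_pos j with rfl | hj₀
    · obtain ⟨t, ht⟩ := sq_dvd_factorial_mul_pow_add p c
      refine ⟨t, ?_⟩
      simp only [Nat.choose_zero_right, Nat.descFactorial_self, Nat.sub_zero, if_true]
      push_cast
      linear_combination ht
    · obtain ⟨t, ht⟩ := sq_dvd_choose_mul_descFactorial hp hj₀ (Finset.mem_range.mp hj)
      refine ⟨t * c ^ (p - j), ?_⟩
      have := congrArg (fun z : ℕ => (z : ℤ) * c ^ (p - j)) ht
      simp only [if_neg hj₀.ne']
      push_cast at this ⊢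
      linear_combination this
  choose! t ht using hcoeff
  refine ⟨∑ j ∈ range p, t j • (y ^ j * x ^ j), ?_⟩
  rw [pow_mul_pow_sub_pow_mul_pow_eq_sum h,
    Finset.sum_congr rfl fun j hj => by rw [ht j hj, sub_smul, mul_smul],
    Finset.sum_sub_distrib, ← Finset.smul_sum]
  simp only [ite_smul, zero_smul, Finset.sum_ite_eq', Finset.mem_range, hp.pos, if_true,
    pow_zero, one_mul, ← zsmul_one, neg_smul]
  abel

theorem exists_sub_neg_eq_nsmul_of_nsmul_eq_pow_commutator {A : Type*} [Ring A]
    [IsAddTorsionFree A] (p : ℕ) [Fact p.Prime] {x y c : A} {ω : ℤ} (h : x * y - y * x = ω)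
    (hc : p • c = x ^ p * y ^ p - y ^ p * x ^ p) : ∃ d : A, c - ((-ω : ℤ) : A) = p • d := by
  obtain ⟨e, he⟩ := exists_pow_mul_pow_sub_pow_mul_pow p h
  refine ⟨e, nsmul_right_injective (Fact.out : p.Prime).ne_zero ?_⟩
  show p • (c - _) = p • (p • e)
  rw [smul_sub, hc, he]
  simp only [zsmul_eq_mul, nsmul_eq_mul]
  push_cast
  rw [mul_neg, sub_neg_eq_add, neg_add_cancel_comm, sq, mul_assoc]

section NoncommMonomial

variable {M ι : Type*} [Monoid M] {g : ι → M}

lemma Pairwise.set_pairwise_commute_pow (hg : Pairwise fun k l => Commute (g k) (g l))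
    (s : Set ι) (a b : ι → ℕ) : s.Pairwise fun k l => Commute (g k ^ a k) (g l ^ b l) :=
  hg.set_pairwise s |>.mono' fun _ _ h => h.pow_pow _ _

variable [Fintype ι]

def noncommMonomial (g : ι → M) (hg : Pairwise fun k l => Commute (g k) (g l)) (a : ι →₀ ℕ) :
    M :=
  univ.noncommProd (fun k => g k ^ a k) (hg.set_pairwise_commute_pow _ a a)

variable (hg : Pairwise fun k l => Commute (g k) (g l))

lemma noncommMonomial_add (a b : ι →₀ ℕ) :
    noncommMonomial g hg (a + b) = noncommMonomial g hg a * noncommMonomial g hg b := by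
  simp only [noncommMonomial, Finsupp.add_apply, pow_add]
  exact noncommProd_mul_distrib (fun k => g k ^ a k) (fun k => g k ^ b k) _ _
    (hg.set_pairwise_commute_pow _ b a)

lemma noncommMonomial_single [DecidableEq ι] (k : ι) (m : ℕ) :
    noncommMonomial g hg (Finsupp.single k m) = g k ^ m := by
  have hrest : ∀ l ∈ univ.erase k, g l ^ Finsupp.single k m l = 1 := fun l hl => by
    rw [Finsupp.single_eq_of_ne (mem_erase.mp hl).1, pow_zero]
  calc noncommMonomial g hg (Finsupp.single k m)
      = g k ^ Finsupp.single k m k * (univ.erase k).noncommProd _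
          (hg.set_pairwise_commute_pow _ _ _) := (mul_noncommProd_erase _ (mem_univ k) _ _).symm
    _ = g k ^ m := by
      rw [Finset.noncommProd_eq_pow_card _ _ _ 1 hrest, one_pow, mul_one, Finsupp.single_eq_same]

lemma noncommMonomial_zero : noncommMonomial g hg 0 = 1 := by
  rw [noncommMonomial, Finset.noncommProd_eq_pow_card _ _ _ 1 fun l _ => by simp, one_pow]

lemma commute_noncommMonomial {x : M} {a : ι →₀ ℕ} (h : ∀ k, a k ≠ 0 → Commute x (g k)) :
    Commute x (noncommMonomial g hg a) := by
  refine noncommProd_commute _ _ _ _ fun k _ => ?_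
  by_cases hk : a k = 0
  · simp [hk]
  · exact (h k hk).pow_right _

end NoncommMonomial

section PartialDerivatives

variable {σ R : Type*}

lemma MvPolynomial.commute_mulLeft_X [CommSemiring R] (k l : σ) :
    Commute (mulLeft R (X k : MvPolynomial σ R)) (mulLeft R (X l)) :=
  LinearMap.ext fun f => by simp [mul_left_comm]

lemma MvPolynomial.commute_pderiv [CommRing R] (k l : σ) :
    Commute (pderiv k : Derivation R (MvPolynomial σ R) _).toLinearMap (pderiv l).toLinearMap := by
  have h : ⁅(pderiv k : Derivation R (MvPolynomial σ R) _), pderiv l⁆ = 0 :=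
    derivation_ext fun i => by
      rw [Derivation.commutator_apply]
      classical
      simp [pderiv_X, Pi.single_apply, apply_ite]
  refine LinearMap.ext fun f => ?_
  simpa [Derivation.commutator_apply, sub_eq_zero] using congrArg (· f) h

lemma MvPolynomial.pderiv_mul_mulLeft_X_sub [CommRing R] [DecidableEq σ] (k l : σ) :
    (pderiv k : Derivation R (MvPolynomial σ R) _).toLinearMap * mulLeft R (X l)
      - mulLeft R (X l) * (pderiv k).toLinearMap = if k = l then 1 else 0 :=
  LinearMap.ext fun f => by split_ifs with h <;> simp [Derivation.leibniz, pderiv_X, h, Ne.symm]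

lemma MvPolynomial.pderiv_pow_monomial_s18 [CommSemiring R] (k : σ) (e : ℕ) (m : σ →₀ ℕ) (r : R) :
    ((pderiv k).toLinearMap ^ e) (monomial m r)
      = monomial (m - Finsupp.single k e) ((m k).descFactorial e * r) := by
  induction e with
  | zero => simp
  | succ e ih =>
    rw [pow_succ', Module.End.mul_apply, ih, Derivation.coeFn_coe, pderiv_monomial, tsub_tsub,
      ← Finsupp.single_add, Finsupp.tsub_apply, Finsupp.single_eq_same, Nat.descFactorial_succ]
    push_cast
    ring_nf

variable [Fintype σ]

lemma Finsupp.prod_descFactorial_ne_zero_iff (m b : σ →₀ ℕ) :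
    ∏ l, (m l).descFactorial (b l) ≠ 0 ↔ b ≤ m := by
  simp [Finset.prod_ne_zero_iff, Nat.descFactorial_eq_zero_iff_lt, Finsupp.le_def]

lemma Finsupp.prod_descFactorial_single_add [DecidableEq σ] (m b : σ →₀ ℕ) {k : σ} (hk : b k = 0)
    (e : ℕ) :
    ∏ l, (m l).descFactorial ((Finsupp.single k e + b) l)
      = (m k).descFactorial e * ∏ l, (m l).descFactorial (b l) := by
  rw [← Finset.mul_prod_erase _ _ (mem_univ k),
    ← Finset.mul_prod_erase _ (fun l => (m l).descFactorial (b l)) (mem_univ k)]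
  simp only [Finsupp.add_apply, Finsupp.single_eq_same, hk, add_zero, Nat.descFactorial_zero,
    one_mul]
  congr 1
  refine Finset.prod_congr rfl fun l hl => ?_
  rw [Finsupp.single_eq_of_ne (mem_erase.mp hl).1, zero_add]

end PartialDerivatives

namespace WeylAlgebra

variable {R : Type*} [CommRing R] {n : ℕ}

def xIdx (k : Fin n) : Fin (2 * n) := ⟨k, by omega⟩

/-- `x̂_{n+k}` plays the role of `∂/∂x_k`: the relation `ω_{n+k,k} = 1` reads `[∂_k, x_k] = 1`. -/
def dIdx (k : Fin n) : Fin (2 * n) := ⟨n + k, by omega⟩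

lemma exists_eq_xIdx_or_dIdx (i : Fin (2 * n)) : (∃ k, i = xIdx k) ∨ ∃ k, i = dIdx k := by
  by_cases hi : (i : ℕ) < n
  · exact .inl ⟨⟨i, hi⟩, rfl⟩
  · exact .inr ⟨⟨i - n, by omega⟩, Fin.ext (by simp [dIdx]; omega)⟩

@[simp] lemma weylOmega_xIdx_xIdx (k l : Fin n) : weylOmega n (xIdx k) (xIdx l) = 0 := by
  simp only [weylOmega, xIdx]
  split_ifs <;> omega

@[simp] lemma weylOmega_dIdx_dIdx (k l : Fin n) : weylOmega n (dIdx k) (dIdx l) = 0 := by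
  simp only [weylOmega, dIdx]
  split_ifs <;> omega

@[simp] lemma weylOmega_dIdx_xIdx (k l : Fin n) :
    weylOmega n (dIdx k) (xIdx l) = if k = l then 1 else 0 := by
  simp only [weylOmega, dIdx, xIdx, Fin.ext_iff]
  split_ifs <;> omega

@[simp] lemma weylOmega_xIdx_dIdx (k l : Fin n) :
    weylOmega n (xIdx k) (dIdx l) = -if l = k then 1 else 0 := by
  simp only [weylOmega, dIdx, xIdx, Fin.ext_iff]
  split_ifs <;> omega

lemma weylGen_mul_sub_mul (i j : Fin (2 * n)) :
    weylGen R n i * weylGen R n j - weylGen R n j * weylGen R n i = weylOmega n i j := by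
  have h := RingQuot.mkAlgHom_rel R (WeylRel.comm (R := R) i j)
  rwa [map_sub, map_mul, map_mul, map_intCast] at h

section Lift

variable {B : Type*} (ξ η : Fin n → B)

def splitGen (i : Fin (2 * n)) : B :=
  if h : (i : ℕ) < n then ξ ⟨i, h⟩ else η ⟨i - n, by omega⟩

@[simp] lemma splitGen_xIdx (k : Fin n) : splitGen ξ η (xIdx k) = ξ k := by
  simp [splitGen, xIdx]

@[simp] lemma splitGen_dIdx (k : Fin n) : splitGen ξ η (dIdx k) = η k := by
  simp [splitGen, dIdx]

variable [Ring B] [Algebra R B]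

noncomputable def lift (hξ : ∀ k l, Commute (ξ k) (ξ l)) (hη : ∀ k l, Commute (η k) (η l))
    (hηξ : ∀ k l, η k * ξ l - ξ l * η k = if k = l then 1 else 0) :
    WeylAlgebra R n →ₐ[R] B :=
  RingQuot.liftAlgHom R ⟨FreeAlgebra.lift R (splitGen ξ η), by
    rintro _ _ ⟨i, j⟩
    simp only [map_sub, map_mul, FreeAlgebra.lift_ι_apply, map_intCast]
    rcases exists_eq_xIdx_or_dIdx i with ⟨k, rfl⟩ | ⟨k, rfl⟩ <;>
      rcases exists_eq_xIdx_or_dIdx j with ⟨l, rfl⟩ | ⟨l, rfl⟩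
    · simp [(hξ k l).eq]
    · rw [splitGen_xIdx, splitGen_dIdx, ← neg_sub, hηξ]
      simp
    · simp [hηξ]
    · simp [(hη k l).eq]⟩

lemma lift_weylGen (hξ : ∀ k l, Commute (ξ k) (ξ l)) (hη : ∀ k l, Commute (η k) (η l))
    (hηξ : ∀ k l, η k * ξ l - ξ l * η k = if k = l then 1 else 0) (i : Fin (2 * n)) :
    lift (R := R) ξ η hξ hη hηξ (weylGen R n i) = splitGen ξ η i := by
  rw [lift, weylGen, RingQuot.liftAlgHom_mkAlgHom_apply, FreeAlgebra.lift_ι_apply]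

end Lift

variable (R)

noncomputable abbrev xGen (k : Fin n) : WeylAlgebra R n := weylGen R n (xIdx k)

noncomputable abbrev dGen (k : Fin n) : WeylAlgebra R n := weylGen R n (dIdx k)

lemma pairwise_commute_xGen : Pairwise fun k l : Fin n => Commute (xGen R k) (xGen R l) :=
  fun _ _ _ => sub_eq_zero.mp (by simp [weylGen_mul_sub_mul])

lemma pairwise_commute_dGen : Pairwise fun k l : Fin n => Commute (dGen R k) (dGen R l) :=
  fun _ _ _ => sub_eq_zero.mp (by simp [weylGen_mul_sub_mul])

lemma commute_xGen_dGen {k l : Fin n} (h : k ≠ l) : Commute (xGen R k) (dGen R l) :=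
  sub_eq_zero.mp (by simp [weylGen_mul_sub_mul, Ne.symm h])

lemma xGen_mul_dGen_sub (k : Fin n) :
    xGen R k * dGen R k - dGen R k * xGen R k = ((-1 : ℤ) : WeylAlgebra R n) := by
  simp [weylGen_mul_sub_mul]

variable (n) in
noncomputable def xMonomial (a : Fin n →₀ ℕ) : WeylAlgebra R n :=
  noncommMonomial (xGen R) (pairwise_commute_xGen R) a

variable (n) in
noncomputable def dMonomial (b : Fin n →₀ ℕ) : WeylAlgebra R n :=
  noncommMonomial (dGen R) (pairwise_commute_dGen R) b

variable (n) in
noncomputable def weylMonomial (q : (Fin n →₀ ℕ) × (Fin n →₀ ℕ)) : WeylAlgebra R n :=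
  xMonomial R n q.1 * dMonomial R n q.2

lemma xMonomial_add_single (a : Fin n →₀ ℕ) (k : Fin n) :
    xMonomial R n (a + Finsupp.single k 1) = xMonomial R n a * xGen R k := by
  rw [xMonomial, noncommMonomial_add, noncommMonomial_single, pow_one, ← xMonomial]

lemma dMonomial_add_single (b : Fin n →₀ ℕ) (k : Fin n) :
    dMonomial R n (b + Finsupp.single k 1) = dMonomial R n b * dGen R k := by
  rw [dMonomial, noncommMonomial_add, noncommMonomial_single, pow_one, ← dMonomial]

lemma dMonomial_mul_xGen (b : Fin n →₀ ℕ) (k : Fin n) :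
    dMonomial R n b * xGen R k
      = xGen R k * dMonomial R n b + b k • dMonomial R n (b - Finsupp.single k 1) := by
  have hsplit : ∀ m, dMonomial R n (Finsupp.single k m + b.erase k)
      = dGen R k ^ m * dMonomial R n (b.erase k) := fun m => by
    rw [dMonomial, noncommMonomial_add, noncommMonomial_single, ← dMonomial]
  have hb := hsplit (b k)
  rw [Finsupp.single_add_erase] at hb
  have hb' := hsplit (b k - 1)
  rw [show Finsupp.single k (b k - 1) + b.erase k = b - Finsupp.single k 1 by
    ext l; rcases eq_or_ne l k with rfl | hl <;> simp [*]] at hb'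
  have hrest : Commute (xGen R k) (dMonomial R n (b.erase k)) :=
    commute_noncommMonomial _ fun l hl =>
      commute_xGen_dGen R fun h => hl (h ▸ Finsupp.erase_same)
  have hpow := mul_pow_sub_pow_mul_of_mul_sub_mul (xGen_mul_dGen_sub R k) (b k)
  rw [hb', hb, mul_assoc, ← hrest.eq, ← mul_assoc, ← mul_assoc, ← smul_mul_assoc, ← add_mul]
  congr 1
  rw [← sub_eq_iff_eq_add', ← neg_sub, hpow]
  simp

variable (n)

lemma weylMonomial_mul_weylGen_mem (q : (Fin n →₀ ℕ) × (Fin n →₀ ℕ)) (i : Fin (2 * n)) :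
    weylMonomial R n q * weylGen R n i ∈ Submodule.span R (Set.range (weylMonomial R n)) := by
  obtain ⟨a, b⟩ := q
  rcases exists_eq_xIdx_or_dIdx i with ⟨k, rfl⟩ | ⟨k, rfl⟩
  · rw [weylMonomial, mul_assoc, dMonomial_mul_xGen, mul_add, ← mul_assoc, ← xMonomial_add_single,
      mul_smul_comm]
    exact add_mem (Submodule.subset_span ⟨(_, b), rfl⟩)
      (Submodule.smul_of_tower_mem _ _ (Submodule.subset_span ⟨(a, b - _), rfl⟩))
  · rw [weylMonomial, mul_assoc, ← dMonomial_add_single]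
    exact Submodule.subset_span ⟨(a, b + _), rfl⟩

lemma span_weylMonomial : Submodule.span R (Set.range (weylMonomial R n)) = ⊤ := by
  set S := Submodule.span R (Set.range (weylMonomial R n))
  have hgen (i : Fin (2 * n)) : ∀ x ∈ S, x * weylGen R n i ∈ S := fun x hx => by
    induction hx using Submodule.span_induction with
    | mem _ h => obtain ⟨q, rfl⟩ := h; exact weylMonomial_mul_weylGen_mem R n q i
    | zero => simp
    | add _ _ _ _ hx hy => rw [add_mul]; exact add_mem hx hy
    | smul r _ _ hx => rw [smul_mul_assoc]; exact S.smul_mem r hx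
  have hmul (y : WeylAlgebra R n) : ∀ x ∈ S, x * y ∈ S := by
    obtain ⟨f, rfl⟩ := RingQuot.mkAlgHom_surjective R (WeylRel R n) y
    induction f using FreeAlgebra.induction with
    | grade0 r =>
      intro x hx
      rw [AlgHom.commutes, ← Algebra.commutes, ← Algebra.smul_def]
      exact S.smul_mem r hx
    | grade1 i => exact hgen i
    | mul f g hf hg => intro x hx; rw [map_mul, ← mul_assoc]; exact hg _ (hf x hx)
    | add f g hf hg => intro x hx; rw [map_add, mul_add]; exact add_mem (hf x hx) (hg x hx)
  have hone : (1 : WeylAlgebra R n) ∈ S := by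
    have h : weylMonomial R n (0, 0) ∈ S := Submodule.subset_span ⟨(0, 0), rfl⟩
    rwa [weylMonomial, xMonomial, dMonomial, noncommMonomial_zero, noncommMonomial_zero,
      one_mul] at h
  exact eq_top_iff.mpr fun y _ => one_mul y ▸ hmul y 1 hone

noncomputable def fockRep : WeylAlgebra R n →ₐ[R] Module.End R (MvPolynomial (Fin n) R) :=
  lift (fun k => mulLeft R (X k)) (fun k => (pderiv k).toLinearMap)
    (commute_mulLeft_X (R := R)) (commute_pderiv (R := R)) (pderiv_mul_mulLeft_X_sub (R := R))

lemma fockRep_xGen (k : Fin n) : fockRep R n (xGen R k) = mulLeft R (X k) := by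
  rw [fockRep, lift_weylGen, splitGen_xIdx]

lemma fockRep_dGen (k : Fin n) : fockRep R n (dGen R k) = (pderiv k).toLinearMap := by
  rw [fockRep, lift_weylGen, splitGen_dIdx]

lemma fockRep_xMonomial (a : Fin n →₀ ℕ) (f : MvPolynomial (Fin n) R) :
    fockRep R n (xMonomial R n a) f = monomial a 1 * f := by
  induction a using Finsupp.induction generalizing f with
  | zero => simp [xMonomial, noncommMonomial_zero]
  | single_add k e a _ _ ih =>
    rw [xMonomial, noncommMonomial_add, noncommMonomial_single, ← xMonomial, map_mul, map_pow,
      Module.End.mul_apply, ih, fockRep_xGen, pow_mulLeft, mulLeft_apply,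
      ← mul_assoc, X_pow_eq_monomial, monomial_mul, one_mul]

lemma fockRep_dMonomial (b m : Fin n →₀ ℕ) (r : R) :
    fockRep R n (dMonomial R n b) (monomial m r)
      = monomial (m - b) ((∏ l, (m l).descFactorial (b l) : ℕ) * r) := by
  induction b using Finsupp.induction with
  | zero => simp [dMonomial, noncommMonomial_zero]
  | single_add k e b hk _ ih =>
    rw [Finsupp.notMem_support_iff] at hk
    rw [dMonomial, noncommMonomial_add, noncommMonomial_single, ← dMonomial, map_mul, map_pow,
      Module.End.mul_apply, ih, fockRep_dGen, pderiv_pow_monomial_s18, Finsupp.tsub_apply, hk,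
      Nat.sub_zero, tsub_tsub, add_comm b, Finsupp.prod_descFactorial_single_add m b hk,
      ← mul_assoc]
    push_cast
    rfl

lemma fockRep_weylMonomial (q : (Fin n →₀ ℕ) × (Fin n →₀ ℕ)) (m : Fin n →₀ ℕ) :
    fockRep R n (weylMonomial R n q) (monomial m 1)
      = monomial (q.1 + (m - q.2)) ((∏ l, (m l).descFactorial (q.2 l) : ℕ) : R) := by
  rw [weylMonomial, map_mul, Module.End.mul_apply, fockRep_dMonomial, fockRep_xMonomial,
    monomial_mul, one_mul, mul_one]

theorem linearIndependent_weylMonomial [IsDomain R] [CharZero R] :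
    LinearIndependent R (weylMonomial R n) := by
  rw [linearIndependent_iff]
  intro l hl
  by_contra hne
  -- Apply the relation to `X ^ b₀`, with `b₀` minimal among the exponents of `∂`, and read off
  -- the coefficient of `X ^ a₀`: `∂ ^ b` kills `X ^ b₀` unless `b ≤ b₀`, so only `(a₀, b₀)`
  -- contributes.
  obtain ⟨q₀, hq₀, hmin⟩ := exists_minimalFor_of_wellFoundedLT (· ∈ l.support) Prod.snd
    (Finsupp.support_nonempty_iff.mpr hne)
  have key := congrArg (fun x => coeff q₀.1 (fockRep R n x (monomial q₀.2 1))) hl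
  simp only [Finsupp.linearCombination_apply, Finsupp.sum, map_sum, map_smul,
    LinearMap.sum_apply, LinearMap.smul_apply, fockRep_weylMonomial,
    coeff_sum, coeff_smul, coeff_monomial, map_zero, LinearMap.zero_apply, coeff_zero] at key
  rw [Finset.sum_eq_single q₀] at key
  · simp only [tsub_self, add_zero, if_true, smul_eq_mul] at key
    refine (mul_ne_zero (Finsupp.mem_support_iff.mp hq₀) ?_) key
    exact Nat.cast_ne_zero.mpr ((Finsupp.prod_descFactorial_ne_zero_iff _ _).mpr le_rfl)
  · intro q hq hne
    by_cases hle : q.2 ≤ q₀.2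
    · have hq2 : q.2 = q₀.2 := le_antisymm hle (hmin hq hle)
      rw [hq2, tsub_self, add_zero, if_neg fun h => hne (Prod.ext h hq2), smul_zero]
    · rw [← Finsupp.prod_descFactorial_ne_zero_iff, not_not] at hle
      simp [hle]
  · exact fun h => absurd hq₀ h

variable [IsDomain R] [CharZero R]

noncomputable def basisWeylMonomial :
    Module.Basis ((Fin n →₀ ℕ) × (Fin n →₀ ℕ)) R (WeylAlgebra R n) :=
  .mk (linearIndependent_weylMonomial R n) (span_weylMonomial R n).ge

instance : IsAddTorsionFree (WeylAlgebra R n) :=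
  have := (basisWeylMonomial R n).isTorsionFree
  .of_isTorsionFree R _

end WeylAlgebra

/-- With the canonical bracket `{a,b} := ([ã,b̃]/p mod p)` on the center of
`A_{n,ℤ}/p`, one has `{y_i, y_j} = -ω_{ij}` for the central generators
`y_i = x̂_i^p`: for any `c` with `p·c = [x̂_i^p, x̂_j^p]` in `A_{n,ℤ}`, the class
of `c` modulo `p` equals `-ω_{ij}`. -/
theorem stmt18 (p : ℕ) [Fact p.Prime] (n : ℕ) (i j : Fin (2 * n))
    (c : WeylAlgebra ℤ n)
    (hc : p • c = weylGen ℤ n i ^ p * weylGen ℤ n j ^ p -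
      weylGen ℤ n j ^ p * weylGen ℤ n i ^ p) :
    ∃ d : WeylAlgebra ℤ n,
      c - ((-weylOmega n i j : ℤ) : WeylAlgebra ℤ n) = p • d :=
  exists_sub_neg_eq_nsmul_of_nsmul_eq_pow_commutator p (WeylAlgebra.weylGen_mul_sub_mul i j) hc
end

section
/- Let k be a field of characteristic p and let f be an automorphism of the Weyl algebra A_{n,k} such that f(x̂_i) has Bernstein degree ≤ N for all i. Then the induced map on the center sends each y_j = x̂_j^p to a polynomial in y_1,…,y_{2n} of total degree ≤ N. -/
/-- The subspace of elements of Bernstein degree `≤ N` in the Weyl algebra: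
the span of the monomials `x̂^α = x̂_1^{α_1}⋯x̂_{2n}^{α_{2n}}` with `|α| ≤ N`. -/
noncomputable def bernsteinLE (k : Type*) [Field k] (n N : ℕ) :
    Submodule k (WeylAlgebra k n) :=
  Submodule.span k
    {m | ∃ α : Fin (2 * n) → ℕ, (∑ i, α i) ≤ N ∧
      m = ((List.finRange (2 * n)).map fun i => weylGen k n i ^ α i).prod}

/-!
Multiplicativity of the Bernstein filtration puts `z = f(x̂_j^p) = f(x̂_j)^p` in degree `≤ pN`,
and `z` is central because `x̂_j^p` is. Let `x̂_i` act on `k[X_0, …, X_{2n-1}]` by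
`X_i + ∂/∂X_{i-n}` (the derivative only for `i ≥ n`). Applied to `1`, an ordered monomial
`x̂^α` gives `X^α`: each `x̂_i` meets a polynomial in the `X_l` with `l ≥ i`, which
`∂/∂X_{i-n}` kills. So this symbol `z · 1` is injective on every filtered piece and does not
raise degree, and the symbol of `[x̂_i, z]` is `∑_l ω_{il} ∂_l (z · 1)`. For central `z` all
partial derivatives of the symbol vanish, so in characteristic `p` it is
`Q(X_0^p, …, X_{2n-1}^p)` with `deg Q ≤ N`, and then `z = Q(y)`.
-/

namespace MvPolynomial

variable {σ : Type*}

theorem pderiv_pderiv_comm {R : Type*} [CommSemiring R] (a b : σ) (f : MvPolynomial σ R) :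
    pderiv a (pderiv b f) = pderiv b (pderiv a f) := by
  induction f using MvPolynomial.induction_on' with
  | add f g hf hg => simp [hf, hg]
  | monomial s c =>
    obtain rfl | hab := eq_or_ne a b
    · rfl
    simp only [pderiv_monomial, tsub_right_comm, Finsupp.tsub_apply,
      Finsupp.single_eq_of_ne hab, Finsupp.single_eq_of_ne hab.symm, tsub_zero, mul_right_comm]

theorem vars_X_pow_mul_subset {R : Type*} [CommSemiring R] [DecidableEq σ] (i : σ) (m : ℕ)
    (g : MvPolynomial σ R) : (X i ^ m * g).vars ⊆ insert i g.vars := by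
  rcases subsingleton_or_nontrivial R with hR | hR
  · simp [Subsingleton.elim (X i ^ m * g) 0]
  refine (vars_mul _ _).trans (Finset.union_subset ?_ (Finset.subset_insert _ _))
  exact (vars_pow _ _).trans (by simp [vars_X])

theorem exists_expand_eq_of_forall_pderiv_eq_zero {R : Type*} [CommRing R] [NoZeroDivisors R]
    {p : ℕ} [CharP R p] {P : MvPolynomial σ R} (h : ∀ i, pderiv i P = 0) :
    ∃ Q, expand p Q = P := by
  classical
  have hdvd : ∀ β ∈ P.support, ∀ i, p ∣ β i := by
    intro β hβ i
    obtain hβi | hβi := Nat.eq_zero_or_pos (β i)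
    · simp [hβi]
    have hcoeff := congrArg (coeff (β - Finsupp.single i 1)) (h i)
    rw [coeff_pderiv, tsub_add_cancel_of_le (Finsupp.single_le_iff.mpr hβi), coeff_zero,
      mul_eq_zero, or_iff_right (mem_support_iff.mp hβ)] at hcoeff
    refine (CharP.cast_eq_zero_iff R p _).mp ?_
    simpa [Nat.cast_sub hβi] using hcoeff
  refine ⟨∑ β ∈ P.support, monomial (β.mapRange (· / p) (Nat.zero_div p)) (P.coeff β), ?_⟩
  conv_rhs => rw [P.as_sum]
  simp only [map_sum, expand_monomial]
  refine Finset.sum_congr rfl fun β hβ => congrArg (monomial · (P.coeff β)) ?_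
  ext i
  simp [Nat.mul_div_cancel' (hdvd β hβ i)]

end MvPolynomial

namespace WeylAlgebra

section Relations

variable {R : Type*} [CommRing R] {n : ℕ}

theorem weylGen_mul_weylGen (i j : Fin (2 * n)) :
    weylGen R n i * weylGen R n j =
      weylGen R n j * weylGen R n i + algebraMap R _ (weylOmega n i j) := by
  have h := RingQuot.mkAlgHom_rel R (WeylRel.comm (R := R) (n := n) i j)
  rw [map_sub, map_mul, map_mul, map_intCast] at h
  rw [map_intCast]
  exact sub_eq_iff_eq_add'.mp h

theorem weylGen_mul_weylGen_pow (i j : Fin (2 * n)) (m : ℕ) :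
    weylGen R n i * weylGen R n j ^ m =
      weylGen R n j ^ m * weylGen R n i +
        ((m : R) * weylOmega n i j) • weylGen R n j ^ (m - 1) := by
  induction m with
  | zero => simp
  | succ m ih =>
    have hcoeff : ((m : R) * weylOmega n i j) • (weylGen R n j ^ (m - 1) * weylGen R n j) =
        ((m : R) * weylOmega n i j) • weylGen R n j ^ m := by
      rcases m with _ | m <;> simp [pow_succ]
    calc weylGen R n i * weylGen R n j ^ (m + 1)
        = weylGen R n j ^ m * (weylGen R n i * weylGen R n j) +
            ((m : R) * weylOmega n i j) • (weylGen R n j ^ (m - 1) * weylGen R n j) := by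
          rw [pow_succ, ← mul_assoc, ih, add_mul, mul_assoc, smul_mul_assoc]
      _ = weylGen R n j ^ (m + 1) * weylGen R n i +
            (((m + 1 : ℕ) : R) * weylOmega n i j) • weylGen R n j ^ (m + 1 - 1) := by
          rw [hcoeff, weylGen_mul_weylGen, mul_add, ← mul_assoc, ← pow_succ,
            ← Algebra.commutes, ← Algebra.smul_def, add_assoc, ← add_smul, Nat.add_sub_cancel]
          push_cast
          ring_nf

theorem commute_of_forall_commute_weylGen {c : WeylAlgebra R n}
    (h : ∀ i, Commute c (weylGen R n i)) (a : WeylAlgebra R n) : Commute c a := by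
  obtain ⟨b, rfl⟩ := RingQuot.mkAlgHom_surjective R (WeylRel R n) a
  induction b with
  | grade0 r =>
    rw [AlgHom.commutes]
    exact (Algebra.commutes r c).symm
  | grade1 x => exact h x
  | mul a b ha hb => exact (map_mul (RingQuot.mkAlgHom R _) a b).symm ▸ ha.mul_right hb
  | add a b ha hb => exact (map_add (RingQuot.mkAlgHom R _) a b).symm ▸ ha.add_right hb

theorem commute_weylGen_pow_char (p : ℕ) [CharP R p] (j : Fin (2 * n)) (a : WeylAlgebra R n) :
    Commute (weylGen R n j ^ p) a :=
  commute_of_forall_commute_weylGen (fun i => by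
    have h := weylGen_mul_weylGen_pow (R := R) i j p
    rw [CharP.cast_eq_zero, zero_mul, zero_smul, add_zero] at h
    exact h.symm) a

end Relations

section OrderedProd

variable {R : Type*} [CommRing R] {n : ℕ}

variable (R) in
noncomputable def orderedProd (l : List (Fin (2 * n))) (α : Fin (2 * n) → ℕ) :
    WeylAlgebra R n :=
  (l.map fun j => weylGen R n j ^ α j).prod

@[simp]
theorem orderedProd_nil (α : Fin (2 * n) → ℕ) : orderedProd R [] α = 1 := rfl

@[simp]
theorem orderedProd_cons (a : Fin (2 * n)) (l : List (Fin (2 * n))) (α : Fin (2 * n) → ℕ) :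
    orderedProd R (a :: l) α = weylGen R n a ^ α a * orderedProd R l α := rfl

theorem orderedProd_congr {l : List (Fin (2 * n))} {α β : Fin (2 * n) → ℕ}
    (h : ∀ j ∈ l, α j = β j) : orderedProd R l α = orderedProd R l β := by
  rw [orderedProd, orderedProd, List.map_congr_left fun j hj => congrArg _ (h j hj)]

theorem weylGen_mul_orderedProd {l : List (Fin (2 * n))} (hl : l.Nodup) (i : Fin (2 * n))
    (α : Fin (2 * n) → ℕ) :
    weylGen R n i * orderedProd R l α = orderedProd R l α * weylGen R n i +
      (l.map fun j =>
        ((α j : R) * weylOmega n i j) • orderedProd R l (α - Pi.single j 1)).sum := by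
  induction l with
  | nil => simp
  | cons a t ih =>
    obtain ⟨hat, ht⟩ := List.nodup_cons.mp hl
    have hhead : orderedProd R (a :: t) (α - Pi.single a 1) =
        weylGen R n a ^ (α a - 1) * orderedProd R t α := by
      have : orderedProd R t (α - Pi.single a 1) = orderedProd R t α := orderedProd_congr
        fun j hj => by simp [Pi.single_eq_of_ne (ne_of_mem_of_not_mem hj hat)]
      simp [this]
    have htail : (t.map fun j => ((α j : R) * weylOmega n i j) •
          orderedProd R (a :: t) (α - Pi.single j 1)) =
        t.map fun j => weylGen R n a ^ α a *
          (((α j : R) * weylOmega n i j) • orderedProd R t (α - Pi.single j 1)) :=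
      List.map_congr_left fun j hj => by
        simp [Pi.single_eq_of_ne (ne_of_mem_of_not_mem hj hat).symm]
    rw [orderedProd_cons, ← mul_assoc, weylGen_mul_weylGen_pow, add_mul, mul_assoc, ih ht,
      List.map_cons, List.sum_cons, hhead, htail, List.sum_map_mul_left, mul_add,
      smul_mul_assoc, mul_assoc]
    abel

end OrderedProd

section Filtration

variable {k : Type*} [Field k] {n : ℕ}

variable (k) in
noncomputable def orderedSpan (l : List (Fin (2 * n))) (d : ℕ) : Submodule k (WeylAlgebra k n) :=
  Submodule.span k
    {m | ∃ α : Fin (2 * n) → ℕ, (l.map α).sum ≤ d ∧ m = orderedProd k l α}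

theorem orderedSpan_mono (l : List (Fin (2 * n))) {d e : ℕ} (h : d ≤ e) :
    orderedSpan k l d ≤ orderedSpan k l e :=
  Submodule.span_mono fun _ ⟨α, hα, hm⟩ => ⟨α, hα.trans h, hm⟩

theorem bernsteinLE_eq_orderedSpan (N : ℕ) :
    bernsteinLE k n N = orderedSpan k (List.finRange (2 * n)) N := by
  simp only [bernsteinLE, orderedSpan, orderedProd, Fin.sum_univ_def]

theorem bernsteinLE_mono {d e : ℕ} (h : d ≤ e) : bernsteinLE k n d ≤ bernsteinLE k n e := by
  simpa only [bernsteinLE_eq_orderedSpan] using orderedSpan_mono _ h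

theorem weylGen_pow_mul_mem_orderedSpan_cons {a : Fin (2 * n)} {l : List (Fin (2 * n))}
    (ha : a ∉ l) {d : ℕ} {w : WeylAlgebra k n} (hw : w ∈ orderedSpan k l d) (m : ℕ) :
    weylGen k n a ^ m * w ∈ orderedSpan k (a :: l) (m + d) := by
  induction hw using Submodule.span_induction with
  | mem w hw =>
    obtain ⟨β, hβ, rfl⟩ := hw
    have hl : ∀ j ∈ l, Function.update β a m j = β j := fun j hj =>
      Function.update_of_ne (ne_of_mem_of_not_mem hj ha) _ _
    refine Submodule.subset_span ⟨Function.update β a m, ?_, ?_⟩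
    · simpa [List.map_congr_left hl] using hβ
    · rw [orderedProd_cons, Function.update_self, orderedProd_congr hl]
  | zero => simp
  | add x y _ _ hx hy => rw [mul_add]; exact add_mem hx hy
  | smul c x _ hx => rw [mul_smul_comm]; exact Submodule.smul_mem _ c hx

theorem weylGen_mul_orderedProd_mem {l : List (Fin (2 * n))} (hl : l.Nodup) {i : Fin (2 * n)}
    (hi : i ∈ l) (α : Fin (2 * n) → ℕ) :
    weylGen k n i * orderedProd k l α ∈ orderedSpan k l ((l.map α).sum + 1) := by
  induction l with
  | nil => simp at hi
  | cons a t ih =>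
    obtain ⟨hat, ht⟩ := List.nodup_cons.mp hl
    have hself : orderedProd k t α ∈ orderedSpan k t (t.map α).sum :=
      Submodule.subset_span ⟨α, le_rfl, rfl⟩
    rw [orderedProd_cons, ← mul_assoc, List.map_cons, List.sum_cons]
    by_cases hia : i = a
    · subst hia
      rw [← pow_succ']
      exact orderedSpan_mono _ (by omega) (weylGen_pow_mul_mem_orderedSpan_cons hat hself _)
    · have hit : i ∈ t := (List.mem_cons.mp hi).resolve_left hia
      rw [weylGen_mul_weylGen_pow, add_mul, mul_assoc, smul_mul_assoc]
      exact add_mem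
        (orderedSpan_mono _ (by omega) (weylGen_pow_mul_mem_orderedSpan_cons hat (ih ht hit) _))
        (Submodule.smul_mem _ _
          (orderedSpan_mono _ (by omega) (weylGen_pow_mul_mem_orderedSpan_cons hat hself _)))

theorem weylGen_mul_mem_bernsteinLE {d : ℕ} {z : WeylAlgebra k n} (hz : z ∈ bernsteinLE k n d)
    (i : Fin (2 * n)) : weylGen k n i * z ∈ bernsteinLE k n (d + 1) := by
  rw [bernsteinLE_eq_orderedSpan] at hz ⊢
  induction hz using Submodule.span_induction with
  | mem w hw =>
    obtain ⟨α, hα, rfl⟩ := hw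
    exact orderedSpan_mono _ (by omega)
      (weylGen_mul_orderedProd_mem (List.nodup_finRange _) (List.mem_finRange i) α)
  | zero => simp
  | add x y _ _ hx hy => rw [mul_add]; exact add_mem hx hy
  | smul c x _ hx => rw [mul_smul_comm]; exact Submodule.smul_mem _ c hx

theorem weylGen_pow_mul_mem_bernsteinLE {d : ℕ} {z : WeylAlgebra k n}
    (hz : z ∈ bernsteinLE k n d) (i : Fin (2 * n)) (m : ℕ) :
    weylGen k n i ^ m * z ∈ bernsteinLE k n (m + d) := by
  induction m with
  | zero => simpa using hz
  | succ m ih =>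
    rw [pow_succ', mul_assoc, add_right_comm]
    exact weylGen_mul_mem_bernsteinLE ih i

theorem orderedProd_mul_mem_bernsteinLE {d : ℕ} {z : WeylAlgebra k n}
    (hz : z ∈ bernsteinLE k n d) (l : List (Fin (2 * n))) (α : Fin (2 * n) → ℕ) :
    orderedProd k l α * z ∈ bernsteinLE k n ((l.map α).sum + d) := by
  induction l with
  | nil => simpa using hz
  | cons a t ih =>
    rw [orderedProd_cons, mul_assoc, List.map_cons, List.sum_cons, add_assoc]
    exact weylGen_pow_mul_mem_bernsteinLE ih a (α a)

theorem mul_mem_bernsteinLE {d e : ℕ} {z w : WeylAlgebra k n} (hz : z ∈ bernsteinLE k n d)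
    (hw : w ∈ bernsteinLE k n e) : z * w ∈ bernsteinLE k n (d + e) := by
  induction hz using Submodule.span_induction with
  | mem m hm =>
    obtain ⟨α, hα, rfl⟩ := hm
    refine bernsteinLE_mono ?_ (orderedProd_mul_mem_bernsteinLE hw _ α)
    rw [← Fin.sum_univ_def]
    omega
  | zero => simp
  | add x y _ _ hx hy => rw [add_mul]; exact add_mem hx hy
  | smul c x _ hx => rw [smul_mul_assoc]; exact Submodule.smul_mem _ c hx

theorem pow_mem_bernsteinLE {N : ℕ} {w : WeylAlgebra k n} (hw : w ∈ bernsteinLE k n N)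
    (m : ℕ) :
    w ^ m ∈ bernsteinLE k n (m * N) := by
  induction m with
  | zero => exact Submodule.subset_span ⟨0, by simp, by simp⟩
  | succ m ih => simpa [pow_succ, add_mul] using mul_mem_bernsteinLE ih hw

end Filtration

section Symbol

open MvPolynomial

variable {R : Type*} [CommRing R] {n : ℕ}

variable (R n) in
noncomputable def shiftedPDeriv (i : Fin (2 * n)) :
    Derivation R (MvPolynomial (Fin (2 * n)) R) (MvPolynomial (Fin (2 * n)) R) :=
  if h : n ≤ (i : ℕ) then pderiv ⟨i - n, by omega⟩ else 0

theorem shiftedPDeriv_X (i j : Fin (2 * n)) :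
    shiftedPDeriv R n i (X j) = if (i : ℕ) = n + j then 1 else 0 := by
  unfold shiftedPDeriv
  split_ifs with h1 h2 h2
  · rw [show j = ⟨i - n, by omega⟩ from Fin.ext (by dsimp only; omega), pderiv_X_self]
  · exact pderiv_X_of_ne fun h => h2 (by rw [h]; dsimp only; omega)
  · omega
  · rfl

theorem shiftedPDeriv_comm (i j : Fin (2 * n)) (f : MvPolynomial (Fin (2 * n)) R) :
    shiftedPDeriv R n i (shiftedPDeriv R n j f) =
      shiftedPDeriv R n j (shiftedPDeriv R n i f) := by
  unfold shiftedPDeriv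
  split_ifs <;> simp [pderiv_pderiv_comm]

theorem shiftedPDeriv_eq_zero_of_forall_le_vars {i : Fin (2 * n)}
    {g : MvPolynomial (Fin (2 * n)) R} (hg : ∀ v ∈ g.vars, i ≤ v) : shiftedPDeriv R n i g = 0 := by
  unfold shiftedPDeriv
  split_ifs with h
  · refine pderiv_eq_zero_of_notMem_vars fun hv => ?_
    have := Fin.le_def.mp (hg _ hv)
    dsimp only at this
    omega
  · rfl

variable (R n) in
noncomputable def genAction (i : Fin (2 * n)) : Module.End R (MvPolynomial (Fin (2 * n)) R) :=
  LinearMap.mulLeft R (X i) + (shiftedPDeriv R n i).toLinearMap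

theorem genAction_commutator (i j : Fin (2 * n)) :
    genAction R n i * genAction R n j - genAction R n j * genAction R n i = weylOmega n i j := by
  refine LinearMap.ext fun f => ?_
  simp only [genAction, LinearMap.sub_apply, Module.End.mul_apply, LinearMap.add_apply,
    LinearMap.mulLeft_apply, Derivation.coeFn_coe, map_add, Derivation.leibniz, shiftedPDeriv_X,
    shiftedPDeriv_comm i j, Module.End.intCast_apply, weylOmega, smul_eq_mul]
  split_ifs <;> first
    | omega
    | (simp only [sub_self, sub_zero, zero_sub, zero_smul, one_smul, neg_smul]; ring)

variable (R n) in
noncomputable def polyRep : WeylAlgebra R n →ₐ[R] Module.End R (MvPolynomial (Fin (2 * n)) R) :=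
  RingQuot.liftAlgHom R ⟨FreeAlgebra.lift R (genAction R n), by
    rintro _ _ ⟨i, j⟩
    simp only [map_sub, map_mul, map_intCast, FreeAlgebra.lift_ι_apply]
    exact genAction_commutator i j⟩

theorem polyRep_weylGen (i : Fin (2 * n)) : polyRep R n (weylGen R n i) = genAction R n i := by
  rw [weylGen, polyRep, RingQuot.liftAlgHom_mkAlgHom_apply, FreeAlgebra.lift_ι_apply]

theorem genAction_pow_apply_of_forall_le_vars {i : Fin (2 * n)}
    {g : MvPolynomial (Fin (2 * n)) R} (hg : ∀ v ∈ g.vars, i ≤ v) (m : ℕ) :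
    (genAction R n i ^ m) g = X i ^ m * g := by
  classical
  induction m with
  | zero => simp
  | succ m ih =>
    have hvars : ∀ v ∈ (X i ^ m * g).vars, i ≤ v := fun v hv => by
      rcases Finset.mem_insert.mp (vars_X_pow_mul_subset i m g hv) with rfl | hv
      exacts [le_rfl, hg v hv]
    rw [pow_succ', Module.End.mul_apply, ih, genAction, LinearMap.add_apply,
      LinearMap.mulLeft_apply, Derivation.coeFn_coe,
      shiftedPDeriv_eq_zero_of_forall_le_vars hvars, add_zero,
      ← mul_assoc, ← pow_succ']

theorem polyRep_orderedProd_apply_one {l : List (Fin (2 * n))} (hl : l.Pairwise (· < ·))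
    (α : Fin (2 * n) → ℕ) :
    polyRep R n (orderedProd R l α) 1 = (l.map fun j => X j ^ α j).prod := by
  classical
  induction l with
  | nil => simp
  | cons a t ih =>
    obtain ⟨ha, ht⟩ := List.pairwise_cons.mp hl
    have hvars : ∀ v ∈ (t.map fun j => (X j : MvPolynomial _ R) ^ α j).prod.vars, a ≤ v := by
      clear ih hl ht
      induction t with
      | nil => simp
      | cons b t ih =>
        intro v hv
        rw [List.map_cons, List.prod_cons] at hv
        rcases Finset.mem_insert.mp (vars_X_pow_mul_subset b (α b) _ hv) with rfl | hv
        exacts [(ha v List.mem_cons_self).le,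
          ih (fun j hj => ha j (List.mem_cons_of_mem b hj)) v hv]
    rw [orderedProd_cons, map_mul, map_pow, polyRep_weylGen, Module.End.mul_apply, ih ht,
      genAction_pow_apply_of_forall_le_vars hvars, List.map_cons, List.prod_cons]

variable (R n) in
noncomputable def symbol : WeylAlgebra R n →ₗ[R] MvPolynomial (Fin (2 * n)) R :=
  LinearMap.applyₗ 1 ∘ₗ (polyRep R n).toLinearMap

theorem symbol_orderedProd_finRange (α : Fin (2 * n) → ℕ) :
    symbol R n (orderedProd R (List.finRange (2 * n)) α) =
      monomial (Finsupp.equivFunOnFinite.symm α) 1 := by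
  rw [symbol, LinearMap.comp_apply, AlgHom.toLinearMap_apply, LinearMap.applyₗ_apply_apply,
    polyRep_orderedProd_apply_one (List.pairwise_lt_finRange _), ← Fin.prod_univ_def, monomial_eq,
    C_1, one_mul, Finsupp.prod_fintype _ _ (fun _ => pow_zero _)]
  rfl

variable (R n) in
noncomputable def ofSymbol : MvPolynomial (Fin (2 * n)) R →ₗ[R] WeylAlgebra R n :=
  (basisMonomials (Fin (2 * n)) R).constr R fun β => orderedProd R (List.finRange (2 * n)) β

theorem ofSymbol_monomial (β : Fin (2 * n) →₀ ℕ) (c : R) :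
    ofSymbol R n (monomial β c) = c • orderedProd R (List.finRange (2 * n)) β := by
  have h : monomial β c = c • basisMonomials (Fin (2 * n)) R β := by simp [smul_monomial]
  rw [h, map_smul, ofSymbol, Module.Basis.constr_basis]

theorem ofSymbol_apply (P : MvPolynomial (Fin (2 * n)) R) :
    ofSymbol R n P =
      ∑ β ∈ P.support, P.coeff β • orderedProd R (List.finRange (2 * n)) β := by
  conv_lhs => rw [P.as_sum]
  simp only [map_sum, ofSymbol_monomial]

end Symbol

section Center

open MvPolynomial

variable {k : Type*} [Field k] {n : ℕ}

theorem ofSymbol_symbol {d : ℕ} {z : WeylAlgebra k n} (hz : z ∈ bernsteinLE k n d) :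
    ofSymbol k n (symbol k n z) = z := by
  induction hz using Submodule.span_induction with
  | mem m hm =>
    obtain ⟨α, -, rfl⟩ := hm
    rw [← orderedProd, symbol_orderedProd_finRange, ofSymbol_monomial, one_smul,
      Finsupp.coe_equivFunOnFinite_symm]
  | zero => simp
  | add x y _ _ hx hy => rw [map_add, map_add, hx, hy]
  | smul c x _ hx => rw [map_smul, map_smul, hx]

theorem totalDegree_symbol_le {d : ℕ} {z : WeylAlgebra k n} (hz : z ∈ bernsteinLE k n d) :
    (symbol k n z).totalDegree ≤ d := by
  induction hz using Submodule.span_induction with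
  | mem m hm =>
    obtain ⟨α, hα, rfl⟩ := hm
    rw [← orderedProd, symbol_orderedProd_finRange]
    refine (totalDegree_monomial_le _ _).trans ?_
    simpa [Finsupp.sum_fintype] using hα
  | zero => simp
  | add x y _ _ hx hy => rw [map_add]; exact (totalDegree_add _ _).trans (max_le hx hy)
  | smul c x _ hx => rw [map_smul]; exact (totalDegree_smul_le _ _).trans hx

theorem symbol_weylGen_mul_sub_mul_weylGen {d : ℕ} {z : WeylAlgebra k n}
    (hz : z ∈ bernsteinLE k n d) (i : Fin (2 * n)) :
    symbol k n (weylGen k n i * z - z * weylGen k n i) =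
      ∑ l, (weylOmega n i l : k) • pderiv l (symbol k n z) := by
  induction hz using Submodule.span_induction with
  | mem m hm =>
    obtain ⟨α, -, rfl⟩ := hm
    rw [← orderedProd, weylGen_mul_orderedProd (List.nodup_finRange _), add_sub_cancel_left,
      ← Fin.sum_univ_def, map_sum, symbol_orderedProd_finRange]
    refine Finset.sum_congr rfl fun l _ => ?_
    have hsub : Finsupp.equivFunOnFinite.symm (α - Pi.single l 1) =
        Finsupp.equivFunOnFinite.symm α - Finsupp.single l 1 := by
      ext; simp [Finsupp.single_eq_pi_single]
    rw [map_smul, symbol_orderedProd_finRange, pderiv_monomial, hsub, smul_monomial,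
      smul_monomial]
    simp [mul_comm]
  | zero => simp
  | add x y _ _ hx hy =>
    rw [mul_add, add_mul, add_sub_add_comm, map_add, hx, hy, ← Finset.sum_add_distrib]
    simp only [map_add, smul_add]
  | smul c x _ hx =>
    rw [mul_smul_comm, smul_mul_assoc, ← smul_sub, map_smul, hx, Finset.smul_sum]
    exact Finset.sum_congr rfl fun _ _ => by
      rw [map_smul, Derivation.map_smul, smul_comm]

theorem exists_weylOmega_eq_ite (l : Fin (2 * n)) :
    ∃ i, ∃ ε : ℤ, IsUnit ε ∧ ∀ m, weylOmega n i m = if m = l then ε else 0 := by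
  by_cases h : (l : ℕ) < n
  · refine ⟨⟨n + l, by omega⟩, 1, isUnit_one, fun m => ?_⟩
    simp only [weylOmega, Fin.ext_iff]
    split_ifs <;> omega
  · refine ⟨⟨l - n, by omega⟩, -1, isUnit_one.neg, fun m => ?_⟩
    simp only [weylOmega, Fin.ext_iff]
    split_ifs <;> omega

theorem pderiv_symbol_eq_zero {d : ℕ} {z : WeylAlgebra k n} (hz : z ∈ bernsteinLE k n d)
    (hc : ∀ i, Commute (weylGen k n i) z) (l : Fin (2 * n)) : pderiv l (symbol k n z) = 0 := by
  obtain ⟨i, ε, hε, hω⟩ := exists_weylOmega_eq_ite l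
  have h := symbol_weylGen_mul_sub_mul_weylGen hz i
  simp only [(hc i).eq, sub_self, map_zero, hω, Int.cast_ite, Int.cast_zero, ite_smul, zero_smul,
    Finset.sum_ite_eq', Finset.mem_univ, if_true] at h
  have hε' : IsUnit (ε : k) := hε.map (Int.castRingHom k)
  exact hε'.smul_eq_zero.mp h.symm

theorem eq_sum_coeff_smul_of_expand_eq_symbol {p : ℕ} (hp : p ≠ 0) {d : ℕ}
    {z : WeylAlgebra k n} (hz : z ∈ bernsteinLE k n d) {Q : MvPolynomial (Fin (2 * n)) k}
    (hQ : expand p Q = symbol k n z) :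
    z = ∑ m ∈ Q.support, Q.coeff m •
      ((List.finRange (2 * n)).map fun i => (weylGen k n i ^ p) ^ m i).prod := by
  classical
  rw [← ofSymbol_symbol hz, ← hQ, ofSymbol_apply, support_expand _ hp,
    Finset.sum_image fun _ _ _ _ h => (nsmul_right_injective hp) h]
  refine Finset.sum_congr rfl fun m _ => ?_
  simp [coeff_expand_smul _ hp, orderedProd, pow_mul]

end Center

end WeylAlgebra

open WeylAlgebra in
/-- Let `k` be a field of characteristic `p` and `f` an automorphism of the Weyl
algebra `A_{n,k}` such that `f(x̂_i)` has Bernstein degree `≤ N` for all `i`.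
Then the induced map on the center sends each `y_j = x̂_j^p` to a polynomial in
`y_1,…,y_{2n}` (with `y_i = x̂_i^p`) of total degree `≤ N`. -/
theorem stmt19 (p : ℕ) [Fact p.Prime] (k : Type*) [Field k] [CharP k p]
    (n N : ℕ) (f : WeylAlgebra k n ≃ₐ[k] WeylAlgebra k n)
    (hf : ∀ i : Fin (2 * n), f (weylGen k n i) ∈ bernsteinLE k n N) :
    ∀ j : Fin (2 * n), ∃ Q : MvPolynomial (Fin (2 * n)) k,
      Q.totalDegree ≤ N ∧
      f (weylGen k n j ^ p) =
        ∑ m ∈ Q.support, Q.coeff m •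
          ((List.finRange (2 * n)).map fun i => (weylGen k n i ^ p) ^ m i).prod := by
  intro j
  have hp : p ≠ 0 := (Fact.out : p.Prime).ne_zero
  have hz : f (weylGen k n j ^ p) ∈ bernsteinLE k n (p * N) := by
    rw [map_pow]
    exact pow_mem_bernsteinLE (hf j) p
  have hcomm : ∀ i, Commute (weylGen k n i) (f (weylGen k n j ^ p)) := fun i => by
    simpa using ((commute_weylGen_pow_char p j (f.symm (weylGen k n i))).map f).symm
  obtain ⟨Q, hQ⟩ := MvPolynomial.exists_expand_eq_of_forall_pderiv_eq_zero
    (pderiv_symbol_eq_zero hz hcomm)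
  refine ⟨Q, ?_, eq_sum_coeff_smul_of_expand_eq_symbol hp hz hQ⟩
  have hdeg := totalDegree_symbol_le hz
  rw [← hQ, MvPolynomial.totalDegree_expand, mul_comm] at hdeg
  exact Nat.le_of_mul_le_mul_left hdeg (Nat.pos_of_ne_zero hp)
end
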